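/- arXiv:1806.08870 — 9 statements merged into one kernel-verified Lean document; each statement's English description precedes it below -/
import Mathlib

section
/- For any finite group G and any positive integer n, the number of elements x in G with x^n = 1 is divisible by gcd(|G|, n). -/
/-!
Write `N_G(n)` for the number of solutions of `x ^ n = 1` in `G`. As `N_G(n) = N_G(gcd(|G|, n))`, it
suffices to show `d ∣ N_G(d)` for `d ∣ |G|`, by induction on `|G|`.

For coprime `m`, `k`, every solution of `x ^ (m * k) = 1` factors uniquely as `u * v` with
`v ^ m = 1` and `u ^ k = 1` in the centralizer `C(v)`, so `N_G(m * k) = ∑_{v ^ m = 1} N_{C(v)}(k)`.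
Summing over conjugacy classes, a noncentral class contributes `|G : C(v)| * N_{C(v)}(k)`, which is
divisible by `k ∣ |G|` because induction gives `gcd(|C(v)|, k) ∣ N_{C(v)}(k)`. Hence
`N_G(m * k) ≡ |Z_m| * N_G(k) (mod k)`, with `Z_m` the `m`-torsion of the center.

For `|G| = m * p ^ c` with `p ∤ m`, the left side is `|G|` and `p ∤ |Z_m|`, so `p ^ c ∣ N_G(p ^ c)`.
Elements of order exactly `p ^ (a + 1)` come in batches of `φ(p ^ (a + 1)) = p ^ a * (p - 1)`, which
carries `p ^ a ∣ N_G(p ^ a)` down to all `a ≤ c`. For general `d = m * p ^ a` the congruence then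
gives `p ^ a ∣ N_G(d)`.
-/

open Subgroup MulAction

theorem MulAction.dvd_sum_of_dvd_card_orbit_mul {G α : Type*} [Group G] [MulAction G α]
    {f : α → ℕ} (hf : ∀ (g : G) a, f (g • a) = f a) {d : ℕ} (s : Finset α)
    (hs : ∀ (g : G), ∀ a ∈ s, g • a ∈ s) (hd : ∀ a ∈ s, d ∣ Nat.card (orbit G a) * f a) :
    d ∣ ∑ a ∈ s, f a := by
  classical
  induction s using Finset.strongInduction with
  | H s ih =>
  obtain rfl | ⟨a, ha⟩ := s.eq_empty_or_nonempty
  · simp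
  have horbit : ∑ b ∈ s with b ∈ orbit G a, f b = Nat.card (orbit G a) * f a := by
    have hcoe : (↑(s.filter (· ∈ orbit G a)) : Set α) = orbit G a :=
      Set.ext fun b => ⟨fun h => (Finset.mem_filter.1 h).2, fun h => by
        obtain ⟨g, rfl⟩ := h
        exact Finset.mem_filter.2 ⟨hs g a ha, mem_orbit _ g⟩⟩
    have hconst : ∀ b ∈ s.filter (· ∈ orbit G a), f b = f a := fun b hb => by
      obtain ⟨g, rfl⟩ := (Finset.mem_filter.1 hb).2
      exact hf g a
    rw [Finset.sum_congr rfl hconst, Finset.sum_const, smul_eq_mul, ← Set.ncard_coe_finset, hcoe,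
      Nat.card_coe_set_eq]
  rw [← Finset.sum_filter_add_sum_filter_not s (· ∈ orbit G a), horbit]
  refine dvd_add (hd a ha) (ih _ (Finset.filter_ssubset.2 ⟨a, ha, not_not.2 (mem_orbit_self a)⟩)
    (fun g b hb => ?_) fun b hb => hd b (Finset.mem_of_mem_filter b hb))
  rw [Finset.mem_filter, ← orbit_eq_iff] at hb ⊢
  rw [orbit_smul]
  exact ⟨hs g b hb.1, hb.2⟩

theorem Nat.dvd_mul_gcd_of_dvd_mul {k a b : ℕ} (h : k ∣ a * b) : k ∣ a * b.gcd k := by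
  rw [← Nat.gcd_mul_left]
  exact Nat.dvd_gcd h (dvd_mul_left k a)

section
variable {G : Type*} [Group G]

theorem card_pow_gcd_card_eq_one [Finite G] (n : ℕ) :
    Nat.card {x : G // x ^ (Nat.card G).gcd n = 1} = Nat.card {x : G // x ^ n = 1} :=
  Nat.card_congr <| Equiv.subtypeEquivRight fun x => by simp [pow_gcd_eq_one, pow_card_eq_one']

theorem Subgroup.card_pow_eq_one (K : Subgroup G) (k : ℕ) :
    Nat.card {u : K // u ^ k = 1} = Nat.card {x : G // x ∈ K ∧ x ^ k = 1} :=
  Nat.card_congr <|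
    (Equiv.subtypeEquivRight fun u => by rw [← OneMemClass.coe_eq_one, SubmonoidClass.coe_pow]).trans
      (Equiv.subtypeSubtypeEquivSubtypeInter (· ∈ K) (· ^ k = 1))

theorem card_centralizer_pow_eq_one (v : G) (k : ℕ) :
    Nat.card {u : centralizer {v} // u ^ k = 1} = Nat.card {u : G // Commute u v ∧ u ^ k = 1} := by
  rw [Subgroup.card_pow_eq_one]
  exact Nat.card_congr <| Equiv.subtypeEquivRight fun u =>
    and_congr_left' mem_centralizer_singleton_iff

theorem card_commute_pow_eq_one_conj (g v : G) (k : ℕ) :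
    Nat.card {u : G // Commute u (g * v * g⁻¹) ∧ u ^ k = 1}
      = Nat.card {u : G // Commute u v ∧ u ^ k = 1} :=
  Nat.card_congr <| .symm <| (MulAut.conj g).toEquiv.subtypeEquiv fun u => by
    rw [MulEquiv.toEquiv_eq_coe, MulEquiv.coe_toEquiv, MulAut.conj_apply, Commute.conj_iff, conj_pow,
      conj_eq_one_iff]

theorem card_commute_pow_eq_one_of_mem_center {v : G} (hv : v ∈ center G) (k : ℕ) :
    Nat.card {u : G // Commute u v ∧ u ^ k = 1} = Nat.card {u : G // u ^ k = 1} :=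
  Nat.card_congr <| Equiv.subtypeEquivRight fun u => and_iff_right (mem_center_iff.1 hv u)

theorem ConjAct.mem_center_of_smul_mem_center {g : ConjAct G} {v : G} (h : g • v ∈ center G) :
    v ∈ center G := by
  rw [← inv_smul_smul g v, ConjAct.smul_def]
  exact (center G).normal_of_characteristic.conj_mem _ h _

theorem card_centralizer_lt [Finite G] {v : G} (hv : v ∉ center G) :
    Nat.card (centralizer {v}) < Nat.card G := by
  refine (card_le_card_group _).lt_of_ne fun h => hv ?_
  rw [card_eq_iff_eq_top, centralizer_eq_top_iff_subset] at h
  exact h rfl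

theorem card_orbit_conjAct_mul_card_centralizer [Finite G] (v : G) :
    Nat.card (orbit (ConjAct G) v) * Nat.card (centralizer {v}) = Nat.card G := by
  rw [nat_card_centralizer_nat_card_stabilizer, mul_comm, Nat.card_coe_set_eq, ← index_stabilizer,
    card_mul_index]
  rfl

theorem dvd_card_orbit_mul_card_commute_pow_eq_one [Finite G] {v : G} {k : ℕ}
    (hk : k ∣ Nat.card G)
    (hv : (Nat.card (centralizer {v})).gcd k ∣ Nat.card {u : centralizer {v} // u ^ k = 1}) :
    k ∣ Nat.card (orbit (ConjAct G) v) * Nat.card {u : G // Commute u v ∧ u ^ k = 1} := by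
  rw [← card_orbit_conjAct_mul_card_centralizer v] at hk
  rw [← card_centralizer_pow_eq_one]
  exact (Nat.dvd_mul_gcd_of_dvd_mul hk).trans (mul_dvd_mul_left _ hv)

section Coprime
variable {m k : ℕ} {a b : ℤ}

theorem zpow_mul_pow_eq_one {x : G} (hx : x ^ (m * k) = 1) (c : ℤ) : (x ^ (c * m)) ^ k = 1 := by
  rw [← zpow_natCast, ← zpow_mul, mul_assoc, ← Nat.cast_mul, mul_comm, zpow_mul, zpow_natCast, hx,
    one_zpow]

theorem Commute.mul_zpow_eq_right (hab : a * m + b * k = 1) {u v : G} (huv : Commute u v)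
    (hu : u ^ k = 1) (hv : v ^ m = 1) : (u * v) ^ (b * k) = v := by
  rw [huv.mul_zpow, mul_comm b, zpow_mul, zpow_natCast, hu, one_zpow, one_mul, ← mul_comm b,
    show b * k = 1 - a * m by linarith, zpow_sub, zpow_one, mul_comm a, zpow_mul, zpow_natCast, hv,
    one_zpow, inv_one, mul_one]

/-- `x = x ^ (a * m) * x ^ (b * k)` is the unique factorization of `x` into commuting factors of
orders dividing `k` and `m`. -/
def powMulEqOneEquivSigma (hab : a * m + b * k = 1) :
    {x : G // x ^ (m * k) = 1} ≃ Σ v : {v : G // v ^ m = 1}, {u : G // Commute u v ∧ u ^ k = 1} where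
  toFun x := ⟨⟨x ^ (b * k), zpow_mul_pow_eq_one (mul_comm m k ▸ x.2) b⟩,
    ⟨x ^ (a * m), Commute.zpow_zpow_self _ _ _, zpow_mul_pow_eq_one x.2 a⟩⟩
  invFun p := ⟨p.2 * p.1, by
    rw [p.2.2.1.mul_pow, mul_comm m k, pow_mul, p.2.2.2, one_pow, one_mul, mul_comm, pow_mul, p.1.2,
      one_pow]⟩
  left_inv x := Subtype.ext <| show _ * _ = _ by rw [← zpow_add, hab, zpow_one]
  right_inv := fun ⟨v, u, huv, hu⟩ => Sigma.subtype_ext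
    (Subtype.ext (huv.mul_zpow_eq_right hab hu v.2))
    (by simpa [huv.eq] using huv.symm.mul_zpow_eq_right (by linarith) v.2 hu)

theorem card_pow_mul_eq_one_eq_sum [Fintype G] [DecidableEq G] (hmk : m.Coprime k) :
    Nat.card {x : G // x ^ (m * k) = 1}
      = ∑ v : {v : G // v ^ m = 1}, Nat.card {u : G // Commute u v ∧ u ^ k = 1} := by
  obtain ⟨a, b, hab⟩ := Nat.isCoprime_iff_coprime.2 hmk
  rw [Nat.card_congr (powMulEqOneEquivSigma hab), Nat.card_sigma]

end Coprime

open scoped IsMulCommutative in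
theorem not_dvd_card_pow_eq_one {H : Type*} [Group H] [IsMulCommutative H] [Finite H] {p m : ℕ}
    (hp : p.Prime) (hpm : ¬ p ∣ m) : ¬ p ∣ Nat.card {x : H // x ^ m = 1} := by
  intro hdvd
  have : Fact p.Prime := ⟨hp⟩
  obtain ⟨y, hy⟩ := exists_prime_orderOf_dvd_card' (G := (powMonoidHom m : H →* H).ker) p hdvd
  exact hpm (hy ▸ orderOf_dvd_of_pow_eq_one (Subtype.ext y.2))

theorem card_pow_mul_eq_one_modEq [Finite G] {m k : ℕ} (hmk : m.Coprime k)
    (hk : ∀ v ∉ center G,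
      k ∣ Nat.card (orbit (ConjAct G) v) * Nat.card {u : G // Commute u v ∧ u ^ k = 1}) :
    Nat.card {x : G // x ^ (m * k) = 1}
      ≡ Nat.card {z : center G // z ^ m = 1} * Nat.card {x : G // x ^ k = 1} [MOD k] := by
  classical
  have := Fintype.ofFinite G
  rw [card_pow_mul_eq_one_eq_sum hmk, ← Finset.sum_subtype _ (fun v => Finset.mem_filter_univ v)
    (fun v => Nat.card {u : G // Commute u v ∧ u ^ k = 1}),
    ← Finset.sum_filter_add_sum_filter_not _ (· ∈ center G)]
  have hcentral : ∑ v ∈ {v : G | v ^ m = 1} with v ∈ center G,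
      Nat.card {u : G // Commute u v ∧ u ^ k = 1}
        = Nat.card {z : center G // z ^ m = 1} * Nat.card {x : G // x ^ k = 1} := by
    rw [Finset.sum_congr rfl fun v hv =>
      card_commute_pow_eq_one_of_mem_center (Finset.mem_filter.1 hv).2 k, Finset.sum_const,
      smul_eq_mul]
    congr 1
    rw [Subgroup.card_pow_eq_one, Nat.card_eq_fintype_card, Fintype.card_subtype,
      Finset.filter_filter]
    simp only [and_comm]
  rw [hcentral, Nat.add_modEq_left_iff]
  refine dvd_sum_of_dvd_card_orbit_mul (G := ConjAct G)
    (fun g v => by rw [ConjAct.smul_def]; exact card_commute_pow_eq_one_conj _ _ _) _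
    (fun g v hv => ?_) fun v hv => hk v (Finset.mem_filter.1 hv).2
  simp only [Finset.mem_filter, Finset.mem_univ, true_and] at hv ⊢
  exact ⟨by rw [← smul_pow', hv.1, smul_one],
    fun h => hv.2 (ConjAct.mem_center_of_smul_mem_center h)⟩

theorem zpowers_eq_zpowers_iff_mem_of_orderOf_eq [Finite G] {x y : G}
    (h : orderOf x = orderOf y) : zpowers x = zpowers y ↔ x ∈ zpowers y :=
  ⟨fun hxy => hxy ▸ mem_zpowers x, fun hx => eq_of_le_of_card_ge (zpowers_le.2 hx)
    (by rw [Nat.card_zpowers, Nat.card_zpowers, h])⟩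

theorem totient_dvd_card_orderOf_eq [Finite G] (d : ℕ) :
    d.totient ∣ Nat.card {x : G // orderOf x = d} := by
  classical
  have := Fintype.ofFinite G
  rw [Nat.card_eq_fintype_card, Fintype.card_subtype,
    Finset.card_eq_sum_card_image (fun x => zpowers x)]
  refine Finset.dvd_sum fun H hH => ?_
  obtain ⟨y, hy, rfl⟩ := Finset.mem_image.1 hH
  rw [Finset.mem_filter_univ] at hy
  have hfiber : ({x ∈ {x : G | orderOf x = d} | zpowers x = zpowers y} : Finset G)
      = ({z : zpowers y | orderOf z = d} : Finset _).map (Function.Embedding.subtype _) := by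
    ext x
    simp only [Finset.mem_filter, Finset.mem_univ, true_and, Finset.mem_map,
      Function.Embedding.coe_subtype, Subtype.exists, orderOf_mk, exists_and_right, exists_eq_right,
      exists_prop]
    exact and_comm.trans
      (and_congr_left fun hx => zpowers_eq_zpowers_iff_mem_of_orderOf_eq (hx.trans hy.symm))
  rw [hfiber, Finset.card_map, IsCyclic.card_orderOf_eq_totient]
  rw [Fintype.card_zpowers, hy]

theorem pow_prime_pow_succ_eq_one_iff {p : ℕ} (hp : p.Prime) (a : ℕ) (x : G) :
    x ^ p ^ (a + 1) = 1 ↔ x ^ p ^ a = 1 ∨ orderOf x = p ^ (a + 1) := by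
  simp only [← orderOf_dvd_iff_pow_eq_one]
  constructor
  · intro h
    obtain ⟨i, hi, hx⟩ := (Nat.dvd_prime_pow hp).1 h
    rcases hi.lt_or_eq with hi | rfl
    · exact .inl (hx ▸ pow_dvd_pow p (Nat.lt_succ_iff.1 hi))
    · exact .inr hx
  · rintro (h | h)
    · exact h.trans (pow_dvd_pow p a.le_succ)
    · exact h.dvd

theorem card_pow_prime_pow_succ_eq_one [Finite G] {p : ℕ} (hp : p.Prime) (a : ℕ) :
    Nat.card {x : G // x ^ p ^ (a + 1) = 1}
      = Nat.card {x : G // x ^ p ^ a = 1} + Nat.card {x : G // orderOf x = p ^ (a + 1)} := by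
  classical
  rw [Nat.card_congr (Equiv.subtypeEquivRight (pow_prime_pow_succ_eq_one_iff hp a)),
    Nat.card_congr (subtypeOrEquiv _ _ _), Nat.card_sum]
  refine Pi.disjoint_iff.2 fun x => Prop.disjoint_iff.2 fun ⟨hx, hxo⟩ => ?_
  have := orderOf_dvd_of_pow_eq_one hx
  rw [hxo, Nat.pow_dvd_pow_iff_le_right hp.one_lt] at this
  omega

theorem pow_dvd_card_pow_prime_pow_eq_one_of_le [Finite G] {p a c : ℕ} (hp : p.Prime)
    (hc : p ^ c ∣ Nat.card {x : G // x ^ p ^ c = 1}) (hac : a ≤ c) :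
    p ^ a ∣ Nat.card {x : G // x ^ p ^ a = 1} := by
  induction c, hac using Nat.le_induction with
  | base => exact hc
  | succ c _ ih =>
    have horder : p ^ c ∣ Nat.card {x : G // orderOf x = p ^ (c + 1)} :=
      (Nat.totient_prime_pow_succ hp c ▸ dvd_mul_right _ _).trans (totient_dvd_card_orderOf_eq _)
    rw [card_pow_prime_pow_succ_eq_one hp c] at hc
    exact ih ((Nat.dvd_add_left horder).1 ((pow_dvd_pow p c.le_succ).trans hc))

theorem pow_dvd_card_pow_prime_pow_eq_one [Finite G] {p a : ℕ} (hp : p.Prime)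
    (ha : p ^ a ∣ Nat.card G)
    (hG : ∀ k, k ∣ Nat.card G → ∀ v ∉ center G,
      k ∣ Nat.card (orbit (ConjAct G) v) * Nat.card {u : G // Commute u v ∧ u ^ k = 1}) :
    p ^ a ∣ Nat.card {x : G // x ^ p ^ a = 1} := by
  have hG0 : Nat.card G ≠ 0 := Nat.card_pos.ne'
  set c := (Nat.card G).factorization p
  have hmod := card_pow_mul_eq_one_modEq ((Nat.coprime_ordCompl hp hG0).symm.pow_right c)
    (hG _ (Nat.ordProj_dvd _ p))
  rw [mul_comm, Nat.ordProj_mul_ordCompl_eq_self,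
    Nat.card_congr (Equiv.subtypeUnivEquiv fun _ => pow_card_eq_one')] at hmod
  have hZ := not_dvd_card_pow_eq_one (H := center G) hp (Nat.not_dvd_ordCompl hp hG0)
  have htop : p ^ c ∣ Nat.card {x : G // x ^ p ^ c = 1} :=
    (((hp.coprime_iff_not_dvd).2 hZ).pow_left c).dvd_of_dvd_mul_left <|
      Nat.modEq_zero_iff_dvd.1 (hmod.symm.trans (Nat.modEq_zero_iff_dvd.2 (Nat.ordProj_dvd _ p)))
  exact pow_dvd_card_pow_prime_pow_eq_one_of_le hp htop ((hp.pow_dvd_iff_le_factorization hG0).1 ha)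

theorem dvd_card_pow_eq_one_of_centralizers [Finite G]
    (hG : ∀ v ∉ center G, ∀ k,
      (Nat.card (centralizer {v})).gcd k ∣ Nat.card {u : centralizer {v} // u ^ k = 1})
    {d : ℕ} (hd : d ∣ Nat.card G) : d ∣ Nat.card {x : G // x ^ d = 1} := by
  have hclass (k : ℕ) (hk : k ∣ Nat.card G) (v : G) (hv : v ∉ center G) :=
    dvd_card_orbit_mul_card_commute_pow_eq_one hk (hG v hv k)
  have hd0 : d ≠ 0 := ne_zero_of_dvd_ne_zero Nat.card_pos.ne' hd
  refine (Nat.dvd_iff_prime_pow_dvd_dvd _ d).2 fun p a hp hpa => ?_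
  have hpd : ordProj[p] d ∣ Nat.card G := (Nat.ordProj_dvd d p).trans hd
  have hmod := card_pow_mul_eq_one_modEq ((Nat.coprime_ordCompl hp hd0).symm.pow_right _)
    (hclass _ hpd)
  rw [mul_comm, Nat.ordProj_mul_ordCompl_eq_self] at hmod
  refine (pow_dvd_pow p ((hp.pow_dvd_iff_le_factorization hd0).1 hpa)).trans <|
    Nat.modEq_zero_iff_dvd.1 (hmod.trans (Nat.modEq_zero_iff_dvd.2 (dvd_mul_of_dvd_right ?_ _)))
  exact pow_dvd_card_pow_prime_pow_eq_one hp hpd hclass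

end

theorem frobenius_divisibility_general (G : Type*) [Group G] [Fintype G] (n : ℕ) :
    Nat.gcd (Fintype.card G) n ∣ Nat.card {x : G // x ^ n = 1} := by
  induction hN : Fintype.card G using Nat.strong_induction_on generalizing G n with
  | _ N ih =>
  subst hN
  rw [← Nat.card_eq_fintype_card, ← card_pow_gcd_card_eq_one]
  refine dvd_card_pow_eq_one_of_centralizers (fun v hv k => ?_) (Nat.gcd_dvd_left _ _)
  have := Fintype.ofFinite (centralizer {v})
  have hlt := card_centralizer_lt hv
  simp only [Nat.card_eq_fintype_card] at hlt ⊢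
  exact ih _ hlt _ k rfl

theorem frobenius_divisibility (G : Type*) [Group G] [Fintype G] (n : ℕ) (hn : 0 < n) :
    Nat.gcd (Fintype.card G) n ∣ Nat.card {x : G // x ^ n = 1} :=
  frobenius_divisibility_general G n
end

section
/- If U is a finite normal subgroup of a group V, then for all v in V and u in U, the elements v^|U| and (vu)^|U| are conjugate by an element of U, i.e., there exists a in U with a⁻¹ v^|U| a = (vu)^|U|. -/
/-!
The map `σ a = v⁻¹ a v u` is a permutation of `U` whose `k`-th power is `a ↦ v⁻ᵏ a (vu)ᵏ`, so
the fixed points of `σᵏ` are the `a ∈ U` with `a⁻¹ vᵏ a = (vu)ᵏ`; if there is one, they form a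
coset of the centralizer of `vᵏ` in `U`, whose order divides `|U|`. If `d` is the shortest cycle
length of `σ`, then `σ` permutes the fixed points of `σᵈ` in cycles of length exactly `d`, so `d`
divides their number and hence `|U|`; every point of a `d`-cycle is therefore fixed by `σ^|U|`.
-/

open Function

namespace Equiv.Perm

variable {X : Type*}

theorem minimalPeriod_subtypePerm (τ : Perm X) {p : X → Prop} (h : ∀ x, p (τ x) ↔ p x)
    (x : {x // p x}) : minimalPeriod (τ.subtypePerm h) x = minimalPeriod τ x := by
  refine minimalPeriod_eq_minimalPeriod_iff.2 fun n => ?_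
  simp only [IsPeriodicPt, IsFixedPt, iterate_eq_pow, subtypePerm_pow, Subtype.ext_iff,
    subtypePerm_apply]

variable [Finite X]

theorem dvd_card_of_forall_minimalPeriod_eq (τ : Perm X) {d : ℕ}
    (h : ∀ x, minimalPeriod τ x = d) : d ∣ Nat.card X := by
  have := Fintype.ofFinite (MulAction.orbitRel.Quotient (Subgroup.zpowers τ) X)
  have hcard (x : X) : Nat.card (MulAction.orbit (Subgroup.zpowers τ) x) = d := by
    rw [Nat.card_congr (MulAction.orbitZPowersEquiv τ x), Nat.card_zmod]
    exact h x
  rw [Nat.card_congr (MulAction.selfEquivSigmaOrbits (Subgroup.zpowers τ) X), Nat.card_sigma]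
  exact Finset.dvd_sum fun ω _ => (hcard _).symm ▸ dvd_rfl

theorem minimalPeriod_dvd_card_isPeriodicPt_of_forall_le (τ : Perm X) {x₀ : X}
    (hmin : ∀ x, minimalPeriod τ x₀ ≤ minimalPeriod τ x) :
    minimalPeriod τ x₀ ∣ Nat.card {x // IsPeriodicPt τ (minimalPeriod τ x₀) x} := by
  set d := minimalPeriod τ x₀
  have hd : 0 < d := minimalPeriod_pos_of_mem_periodicPts (τ.injective.mem_periodicPts x₀)
  have hinv (x : X) : IsPeriodicPt τ d (τ x) ↔ IsPeriodicPt τ d x := by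
    simp only [isPeriodicPt_iff_minimalPeriod_dvd,
      minimalPeriod_apply (τ.injective.mem_periodicPts x)]
  refine dvd_card_of_forall_minimalPeriod_eq (τ.subtypePerm hinv) fun ⟨x, hx⟩ => ?_
  rw [minimalPeriod_subtypePerm]
  exact le_antisymm (Nat.le_of_dvd hd hx.minimalPeriod_dvd) (hmin x)

end Equiv.Perm

namespace Subgroup

theorem card_conjTransporter_eq_card_centralizer {G : Type*} [Group G] (H : Subgroup G)
    {g h : G} (a₀ : H) (ha₀ : (a₀ : G)⁻¹ * g * a₀ = h) :
    Nat.card {a : H // (a : G)⁻¹ * g * a = h} = Nat.card ((centralizer {g}).subgroupOf H) := by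
  refine Nat.card_congr
    { toFun := fun a => ⟨a * a₀⁻¹, ?_⟩
      invFun := fun c => ⟨c * a₀, ?_⟩
      left_inv := fun a => by ext; simp
      right_inv := fun c => by ext; simp }
  · obtain ⟨a, ha⟩ := a
    have hga : g * a = a * h := by rw [← ha]; group
    have hga₀ : (a₀ : G)⁻¹ * g = h * (a₀ : G)⁻¹ := by rw [← ha₀]; group
    rw [mem_subgroupOf, mem_centralizer_singleton_iff, coe_mul, coe_inv, mul_assoc, hga₀,
      ← mul_assoc, ← hga, mul_assoc]
  · have hc : (c : G)⁻¹ * g * c = g := by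
      rw [mul_assoc, ← mem_centralizer_singleton_iff.1 (mem_subgroupOf.1 c.2),
        inv_mul_cancel_left]
    calc ((c * a₀ : H) : G)⁻¹ * g * (c * a₀ : H)
        = (a₀ : G)⁻¹ * ((c : G)⁻¹ * g * c) * a₀ := by push_cast; group
      _ = h := by rw [hc, ha₀]

variable {V : Type*} [Group V] (U : Subgroup V) [U.Normal]

def twistedConj (v : V) (u : U) : Equiv.Perm U :=
  (MulAut.conjNormal v⁻¹).toEquiv.trans (Equiv.mulRight u)

theorem twistedConj_apply (v : V) (u : U) (a : U) :
    (twistedConj U v u a : V) = v⁻¹ * a * v * u := by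
  simp [twistedConj]

theorem twistedConj_pow_apply (v : V) (u : U) (k : ℕ) (a : U) :
    ((twistedConj U v u ^ k) a : V) = (v ^ k)⁻¹ * a * (v * u) ^ k := by
  induction k generalizing a with
  | zero => simp
  | succ k ih =>
    rw [pow_succ', Equiv.Perm.mul_apply, twistedConj_apply, ih]
    simp only [pow_succ v, pow_succ (v * u), mul_inv_rev, mul_assoc]

theorem isPeriodicPt_twistedConj_iff (v : V) (u : U) (k : ℕ) (a : U) :
    IsPeriodicPt (twistedConj U v u) k a ↔ (a : V)⁻¹ * v ^ k * a = (v * u) ^ k := by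
  rw [IsPeriodicPt, IsFixedPt, Equiv.Perm.iterate_eq_pow, Subtype.ext_iff, twistedConj_pow_apply,
    mul_assoc, inv_mul_eq_iff_eq_mul, mul_assoc, inv_mul_eq_iff_eq_mul, eq_comm]

end Subgroup

theorem brauer_lemma (V : Type*) [Group V] (U : Subgroup V) [U.Normal] [Finite U]
    (v : V) (u : U) :
    ∃ a : U, (a : V)⁻¹ * v ^ (Nat.card U) * (a : V) = (v * (u : V)) ^ (Nat.card U) := by
  set σ := U.twistedConj v u
  obtain ⟨a₀, hmin⟩ := Finite.exists_min (minimalPeriod σ)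
  set d := minimalPeriod σ a₀
  have ha₀ : IsPeriodicPt σ d a₀ := isPeriodicPt_minimalPeriod σ a₀
  have hd : d ∣ Nat.card {a // IsPeriodicPt σ d a} :=
    σ.minimalPeriod_dvd_card_isPeriodicPt_of_forall_le hmin
  have hfix : Nat.card {a // IsPeriodicPt σ d a} ∣ Nat.card U := by
    have hconj := (U.isPeriodicPt_twistedConj_iff v u d a₀).1 ha₀
    rw [Nat.card_congr (Equiv.subtypeEquivRight (U.isPeriodicPt_twistedConj_iff v u d)),
      U.card_conjTransporter_eq_card_centralizer a₀ hconj]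
    exact Subgroup.card_subgroup_dvd_card _
  exact ⟨a₀, (U.isPeriodicPt_twistedConj_iff v u _ a₀).1 (ha₀.trans_dvd (hd.trans hfix))⟩
end

section
/- For any finite group G, any subgroup H of G, and any integer n, the number of elements x in G such that x^n lies in H is divisible by |H|. -/
/-!
For a finite `G`-set `Ω`, the pairs `(g, ω)` with `g ^ n • ω = ω` correspond to the pairs
`(g, f)` with `f : ZMod n → Ω` and `g • f (j - 1) = f j`, that is, to the points fixed by `g`
composed with the cyclic shift of `ZMod n → Ω`, which commutes with `G`. For any equivariant
self-map `σ`, the `g` with `g • σ z = z` form a coset of the stabilizer of `z` (or there are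
none), so Burnside's count shows that `|G|` divides the number of such pairs. For `Ω = G ⧸ H`
every point stabilizer is conjugate to `H`, and the pairs number `[G : H] · #{x | x ^ n ∈ H}`.
-/

open MulAction

namespace MulAction

variable (G X : Type*) [Group G] [MulAction G X]

theorem card_sigma_stabilizer :
    Nat.card (Σ x : X, stabilizer G x) = Nat.card (orbitRel.Quotient G X) * Nat.card G := by
  rw [← Nat.card_prod]
  exact Nat.card_congr <|
    (Equiv.subtypeProdEquivSigmaSubtype fun (x : X) g => g ∈ stabilizer G x).symm.trans <|
    ((Equiv.prodComm X G).subtypeEquiv fun _ => Iff.rfl).trans <|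
    (Equiv.subtypeProdEquivSigmaSubtype _).trans (sigmaFixedByEquivOrbitsProdGroup G X)

end MulAction

namespace MulActionHom

variable {G Z : Type*} [Group G] [MulAction G Z] (σ : Z →[G] Z)

/-- The union of the orbits that `σ` maps into themselves. -/
def stableOrbits : SubMulAction G Z where
  carrier := {z | z ∈ orbit G (σ z)}
  smul_mem' g z hz := by
    change g • z ∈ orbit G (σ (g • z))
    rw [map_smul, orbit_smul]
    exact mem_orbit_of_mem_orbit g hz

noncomputable def twistedFixedEquivStabilizer {z : Z} (hz : z ∈ orbit G (σ z)) :
    {g : G // g • σ z = z} ≃ stabilizer G z :=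
  (Equiv.mulRight (mem_orbit_iff.1 hz).choose⁻¹).subtypeEquiv fun g => by
    rw [Equiv.coe_mulRight, mem_stabilizer_iff, mul_smul,
      inv_smul_eq_iff.2 (mem_orbit_iff.1 hz).choose_spec.symm]

theorem card_twistedFixedPoints :
    Nat.card {p : G × Z // p.1 • σ p.2 = p.2} =
      Nat.card (orbitRel.Quotient G σ.stableOrbits) * Nat.card G := by
  rw [← card_sigma_stabilizer]
  refine Nat.card_congr <| Equiv.trans ?_ <| Equiv.sigmaCongrRight fun a =>
    (σ.twistedFixedEquivStabilizer a.2).trans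
      (MulEquiv.subgroupCongr (SubMulAction.stabilizer_of_subMul a).symm).toEquiv
  exact
    { toFun p := ⟨⟨p.1.2, mem_orbit_iff.2 ⟨p.1.1, p.2⟩⟩, p.1.1, p.2⟩
      invFun q := ⟨(q.2.1, q.1.1), q.2.2⟩
      left_inv _ := rfl
      right_inv _ := rfl }

end MulActionHom

section CyclicShift

variable {G Ω : Type*} [Group G] [MulAction G Ω]

theorem pow_smul_eq_pow_smul_of_modEq {g : G} {ω : Ω} {n a b : ℕ} (hω : g ^ n • ω = ω)
    (hab : a ≡ b [MOD n]) : g ^ a • ω = g ^ b • ω := by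
  rw [← pow_mod_period_smul a, ← pow_mod_period_smul b,
    hab.of_dvd (pow_smul_eq_iff_period_dvd.1 hω)]

variable (G Ω) in
def cyclicShift (n : ℕ) : (ZMod n → Ω) →[G] (ZMod n → Ω) where
  toFun f j := f (j - 1)
  map_smul' _ _ := rfl

@[simp]
theorem cyclicShift_apply {n : ℕ} (f : ZMod n → Ω) (j : ZMod n) :
    cyclicShift G Ω n f j = f (j - 1) := rfl

theorem smul_cyclicShift_eq_iff {n : ℕ} {g : G} {f : ZMod n → Ω} :
    g • cyclicShift G Ω n f = f ↔ ∀ j, f (j + 1) = g • f j := by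
  refine funext_iff.trans ⟨fun h j => ?_, fun h j => ?_⟩
  · simpa using (h (j + 1)).symm
  · simpa using (h (j - 1)).symm

theorem apply_natCast_eq_pow_smul {n : ℕ} {g : G} {f : ZMod n → Ω}
    (hf : ∀ j, f (j + 1) = g • f j) (k : ℕ) : f k = g ^ k • f 0 := by
  induction k with
  | zero => simp
  | succ k ih => rw [Nat.cast_succ, hf, ih, pow_succ', mul_smul]

noncomputable def twistedFixedCyclicShiftEquiv (n : ℕ) [NeZero n] (g : G) :
    {f : ZMod n → Ω // g • cyclicShift G Ω n f = f} ≃ {ω : Ω // g ^ n • ω = ω} where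
  toFun f := ⟨f.1 0, by
    rw [← apply_natCast_eq_pow_smul (smul_cyclicShift_eq_iff.1 f.2), ZMod.natCast_self]⟩
  invFun ω := ⟨fun j => g ^ j.val • ω.1, smul_cyclicShift_eq_iff.2 fun j => by
    rw [← mul_smul, ← pow_succ']
    refine pow_smul_eq_pow_smul_of_modEq ω.2 ((ZMod.natCast_eq_natCast_iff _ _ _).1 ?_)
    push_cast
    rw [ZMod.natCast_zmod_val, ZMod.natCast_zmod_val]⟩
  left_inv f := Subtype.ext <| funext fun j => by
    simpa using (apply_natCast_eq_pow_smul (smul_cyclicShift_eq_iff.1 f.2) j.val).symm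
  right_inv ω := Subtype.ext <| by simp

theorem card_dvd_card_pow_smul_eq (n : ℕ) :
    Nat.card G ∣ Nat.card {p : G × Ω // p.1 ^ n • p.2 = p.2} := by
  rcases n.eq_zero_or_pos with rfl | hn
  · simp only [pow_zero, one_smul]
    rw [Nat.card_congr (Equiv.subtypeUnivEquiv fun _ => trivial), Nat.card_prod]
    exact dvd_mul_right _ _
  · have : NeZero n := ⟨hn.ne'⟩
    rw [Nat.card_congr <|
      (Equiv.subtypeProdEquivSigmaSubtype fun g ω => g ^ n • ω = ω).trans <|
      (Equiv.sigmaCongrRight fun g => (twistedFixedCyclicShiftEquiv n g).symm).trans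
      (Equiv.subtypeProdEquivSigmaSubtype _).symm, MulActionHom.card_twistedFixedPoints]
    exact dvd_mul_left _ _

theorem card_dvd_card_zpow_smul_eq (n : ℤ) :
    Nat.card G ∣ Nat.card {p : G × Ω // p.1 ^ n • p.2 = p.2} := by
  rw [Nat.card_congr (Equiv.subtypeEquivRight fun p =>
    zpow_smul_eq_iff_period_dvd.trans (Int.natCast_dvd.trans pow_smul_eq_iff_period_dvd.symm))]
  exact card_dvd_card_pow_smul_eq n.natAbs

end CyclicShift

theorem card_zpow_smul_quotient {G : Type*} [Group G] (H : Subgroup G) (n : ℤ) :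
    Nat.card {p : G × G ⧸ H // p.1 ^ n • p.2 = p.2} =
      H.index * Nat.card {x : G // x ^ n ∈ H} := by
  rw [Subgroup.index, ← Nat.card_prod]
  refine Nat.card_congr <| ((Equiv.prodComm _ _).subtypeEquiv fun _ => Iff.rfl).trans <|
    (Equiv.subtypeProdEquivSigmaSubtype fun q g => g ^ n • q = q).trans <|
    (Equiv.sigmaCongrRight fun q => ?_).trans (Equiv.sigmaEquivProd _ _)
  refine (MulAut.conj q.out⁻¹).toEquiv.subtypeEquiv fun g => ?_
  conv_lhs => rw [← QuotientGroup.out_eq' q]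
  rw [MulEquiv.toEquiv_eq_coe, MulEquiv.coe_toEquiv, ← map_zpow, MulAut.conj_apply, inv_inv,
    eq_comm, MulAction.Quotient.smul_coe, QuotientGroup.eq, smul_eq_mul, mul_assoc]

theorem iwasaki (G : Type*) [Group G] [Fintype G] (H : Subgroup G) (n : ℤ) :
    Nat.card H ∣ Nat.card {x : G // x ^ n ∈ H} := by
  have h := card_dvd_card_zpow_smul_eq (G := G) (Ω := G ⧸ H) n
  rw [card_zpow_smul_quotient, ← H.card_mul_index, mul_comm (Nat.card H)] at h
  exact Nat.dvd_of_mul_dvd_mul_left (Nat.pos_of_ne_zero H.index_ne_zero_of_finite) h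
end

section
/- Let F be a group, G a finite group, and suppose the number of group homomorphisms from F to G is finite and positive. If F admits a surjective homomorphism onto ℤ, then the number of homomorphisms from F to G is divisible by |G|. -/
/-!
The kernel `K` of `deg` has a complement generated by any `t` with `deg t = 1`, so `F ≅ K ⋊ ℤ`,
and a homomorphism `F → G` is a pair `(ψ, g)` with `ψ : K → G` and `g • ψ = ψ ∘ α`, where `G` acts
on `K →* G` by conjugation and `α` is conjugation by `t` on `K`. For fixed `ψ` the admissible `g`
form either nothing or a coset of the stabiliser of `ψ`, and the `ψ` of the second kind form a
`G`-invariant set because `ψ ↦ ψ ∘ α` is `G`-equivariant. So the number of pairs is the sum of the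
stabiliser orders over an invariant set, which by the proof of Burnside's lemma is `|G|` times
its number of orbits.
-/

open MulAction Multiplicative

namespace MonoidHom

variable {N G : Type*} [Group N] [Group G]

instance conjMulAction : MulAction G (N →* G) where
  smul g ψ := (MulAut.conj g).toMonoidHom.comp ψ
  one_smul ψ := by ext n; change 1 * ψ n * 1⁻¹ = ψ n; group
  mul_smul g h ψ := by ext n; change g * h * ψ n * (g * h)⁻¹ = g * (h * ψ n * h⁻¹) * g⁻¹; group

def precomp (α : N →* N) : (N →* G) →[G] (N →* G) where
  toFun ψ := ψ.comp α
  map_smul' _ _ := rfl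

theorem zpow_smul_eq_comp_zpow {ψ : N →* G} {g : G} {α : MulAut N}
    (h : g • ψ = ψ.comp α.toMonoidHom) (n : ℤ) :
    g ^ n • ψ = ψ.comp (α ^ n).toMonoidHom := by
  induction n using Int.induction_on with
  | zero => ext; simp
  | succ n ih =>
    rw [zpow_add_one, mul_smul, h]
    change (g ^ (n : ℤ) • ψ).comp _ = _
    rw [ih, zpow_add_one α]
    rfl
  | pred n ih =>
    have h_inv : g⁻¹ • ψ = ψ.comp α⁻¹.toMonoidHom := by
      rw [inv_smul_eq_iff]
      change ψ = (g • ψ).comp _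
      rw [h]; ext; simp
    rw [zpow_sub_one, mul_smul, h_inv]
    change (g ^ (-n : ℤ) • ψ).comp _ = _
    rw [ih, zpow_sub_one α]
    rfl

end MonoidHom

namespace MulAction

variable {G X : Type*} [Group G] [MulAction G X]

def mapsIntoOrbit (β : X →[G] X) : SubMulAction G X where
  carrier := {x | β x ∈ orbit G x}
  smul_mem' g x hx := by
    change β (g • x) ∈ orbit G (g • x)
    rw [map_smul, orbit_smul]
    exact mem_orbit_of_mem_orbit g hx

def smulEqEquivStabilizer {x y : X} {g₀ : G} (h : g₀ • x = y) :
    {g : G // g • x = y} ≃ stabilizer G x where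
  toFun g := ⟨g₀⁻¹ * g, by rw [mem_stabilizer_iff, mul_smul, g.2, ← h, inv_smul_smul]⟩
  invFun s := ⟨g₀ * s, by rw [mul_smul, mem_stabilizer_iff.mp s.2, h]⟩
  left_inv g := by simp
  right_inv s := by simp

variable (G X) in
noncomputable def sigmaStabilizerEquivOrbitsProdGroup :
    (Σ x : X, stabilizer G x) ≃ Quotient (orbitRel G X) × G :=
  (Equiv.subtypeProdEquivSigmaSubtype fun (x : X) g => g ∈ stabilizer G x).symm.trans <|
    ((Equiv.prodComm X G).subtypeEquiv fun _ => Iff.rfl).trans <|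
      (Equiv.subtypeProdEquivSigmaSubtype fun (g : G) x => g • x = x).trans <|
        sigmaFixedByEquivOrbitsProdGroup G X

theorem card_group_dvd_card_smul_eq_apply (β : X →[G] X) :
    Nat.card G ∣ Nat.card {p : X × G // p.2 • p.1 = β p.1} := by
  let R := mapsIntoOrbit β
  let fibers : {p : X × G // p.2 • p.1 = β p.1} ≃ Σ x : R, {g : G // g • (x : X) = β x} :=
    { toFun p := ⟨⟨p.1.1, p.1.2, p.2⟩, ⟨p.1.2, p.2⟩⟩
      invFun s := ⟨((s.1 : X), s.2.1), s.2.2⟩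
      left_inv _ := rfl
      right_inv _ := rfl }
  let cosets : (Σ x : R, {g : G // g • (x : X) = β x}) ≃ Σ x : R, stabilizer G x :=
    Equiv.sigmaCongrRight fun x => (smulEqEquivStabilizer x.2.choose_spec).trans
      (MulEquiv.subgroupCongr (SubMulAction.stabilizer_of_subMul x).symm).toEquiv
  rw [Nat.card_congr ((fibers.trans cosets).trans (sigmaStabilizerEquivOrbitsProdGroup G R)),
    Nat.card_prod]
  exact dvd_mul_left _ _

end MulAction

namespace SemidirectProduct

variable {N H G : Type*} [Group N] [Group H] [Group G]

def monoidHomEquiv (φ : H →* MulAut N) :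
    (N ⋊[φ] H →* G) ≃ {p : (N →* G) × (H →* G) //
      ∀ h, p.1.comp (φ h).toMonoidHom = (MulAut.conj (p.2 h)).toMonoidHom.comp p.1} where
  toFun f := ⟨(f.comp inl, f.comp inr), fun _ => by ext; simp [inl_aut]⟩
  invFun p := lift p.1.1 p.1.2 p.2
  left_inv f := (lift_unique f).symm
  right_inv p := by ext <;> simp

def monoidHomIntEquiv (φ : Multiplicative ℤ →* MulAut N) :
    (N ⋊[φ] Multiplicative ℤ →* G) ≃
      {p : (N →* G) × G // p.2 • p.1 = p.1.comp (φ (ofAdd 1)).toMonoidHom} :=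
  (monoidHomEquiv φ).trans <| ((Equiv.refl _).prodCongr (zpowersHom G).symm).subtypeEquiv
    fun p => by
      refine ⟨fun h => (h (ofAdd 1)).symm, fun h n => ?_⟩
      have hn : n = ofAdd 1 ^ n.toAdd := by rw [← ofAdd_zsmul, zsmul_one]; rfl
      rw [hn, map_zpow, map_zpow]
      exact (MonoidHom.zpow_smul_eq_comp_zpow h _).symm

end SemidirectProduct

theorem MonoidHom.exists_mulEquiv_semidirectProduct_ker {F : Type*} [Group F]
    (deg : F →* Multiplicative ℤ) (hdeg : Function.Surjective deg) :
    ∃ φ : Multiplicative ℤ →* MulAut deg.ker, Nonempty (deg.ker ⋊[φ] Multiplicative ℤ ≃* F) := by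
  obtain ⟨t, ht⟩ := hdeg (ofAdd 1)
  let S : GroupExtension deg.ker F (Multiplicative ℤ) :=
    { inl := deg.ker.subtype
      rightHom := deg
      inl_injective := Subtype.val_injective
      range_inl_eq_ker_rightHom := deg.ker.range_subtype
      rightHom_surjective := hdeg }
  let s : S.Splitting :=
    { toMonoidHom := zpowersHom F t
      rightInverse_rightHom := DFunLike.congr_fun <|
        show deg.comp (zpowersHom F t) = MonoidHom.id _ from ext_mint (by simpa using ht) }
  exact ⟨s.conjAct, ⟨s.semidirectProductMulEquiv⟩⟩

theorem km_main_special_general (F G : Type*) [Group F] [Group G] [Fintype G]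
    (deg : F →* Multiplicative ℤ) (hdeg : Function.Surjective deg) :
    Fintype.card G ∣ Nat.card (F →* G) := by
  obtain ⟨φ, ⟨e⟩⟩ := deg.exists_mulEquiv_semidirectProduct_ker hdeg
  rw [← Nat.card_eq_fintype_card, ← Nat.card_congr (e.monoidHomCongrLeftEquiv (N := G)),
    Nat.card_congr (SemidirectProduct.monoidHomIntEquiv φ)]
  exact card_group_dvd_card_smul_eq_apply (MonoidHom.precomp (φ (ofAdd 1)).toMonoidHom)

theorem km_main_special (F G : Type*) [Group F] [Group G] [Fintype G]
    (hfin : Finite (F →* G)) (hpos : 0 < Nat.card (F →* G))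
    (deg : F →* Multiplicative ℤ) (hdeg : Function.Surjective deg) :
    Fintype.card G ∣ Nat.card (F →* G) :=
  km_main_special_general F G deg hdeg
end

section
/- Let G be a finite group, H ≤ G a subgroup, and g ∈ G. Then for any integer n, the number of elements x ∈ G with x^n ∈ HgH is divisible by |H|, where HgH = {h₁ g h₂ : h₁, h₂ ∈ H} is the double coset of g. -/
/-!
Let `K` be a subgroup and `S` a union of `(K, K)`-double cosets; we show by induction on `|G|`
that `|K|` divides `|X|`, where `X = {x | x ^ n ∈ S}`. If `N = Z(G) ∩ K` is nontrivial, both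
`K` and `X` are unions of `N`-cosets and the claim descends from `G / N`. Otherwise `K` acts on
`X` by conjugation and Burnside gives `|K| ∣ ∑_{c ∈ K} |Fix c|`, whose `c = 1` term is `|X|`.
For `c ≠ 1` the centralizer `C_G(c)` is proper, and `Fix c = X ∩ C_G(c)` is the same problem
in `C_G(c)` for the subgroup `C_K(c)`, so `|C_K(c)|` divides `|Fix c|` by induction; summing
over the conjugacy classes of `K` then gives `|K| ∣ ∑_{c ≠ 1} |Fix c|`.
-/

open MulAction Subgroup
open scoped Pointwise

theorem MulAction.card_dvd_sum_of_card_stabilizer_dvd {K α : Type*} [Group K] [Finite K]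
    [MulAction K α] [Fintype α] {f : α → ℕ} (hf : ∀ (k : K) (a : α), f (k • a) = f a)
    (hdvd : ∀ a, Nat.card (stabilizer K a) ∣ f a) : Nat.card K ∣ ∑ a, f a := by
  classical
  rw [← Fintype.sum_equiv (selfEquivSigmaOrbits K α).symm _ _ fun _ => rfl, Fintype.sum_sigma]
  refine Finset.dvd_sum fun ω _ => ?_
  obtain ⟨m, hm⟩ := hdvd ω.out
  have horbit : ∀ b : orbit K ω.out, f ((selfEquivSigmaOrbits K α).symm ⟨ω, b⟩) = f ω.out :=
    fun ⟨_, k, rfl⟩ => hf k _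
  rw [Fintype.sum_congr _ _ horbit, Finset.sum_const, Finset.card_univ, smul_eq_mul, hm,
    ← mul_assoc, ← Nat.card_eq_fintype_card, ← Nat.card_prod,
    Nat.card_congr (orbitProdStabilizerEquivGroup K ω.out)]
  exact dvd_mul_right _ _

theorem ConjAct.card_stabilizer_eq_card_centralizer {K : Type*} [Group K] (c : K) :
    Nat.card (stabilizer (ConjAct K) c) = Nat.card (centralizer {c}) := by
  rw [centralizer_eq_comap_stabilizer]
  exact Nat.card_congr (Equiv.subtypeEquiv ConjAct.toConjAct.toEquiv fun _ => Iff.rfl).symm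

theorem MulAction.card_dvd_card_of_card_centralizer_dvd_card_fixedBy {K α : Type*} [Group K]
    [Finite K] [MulAction K α] [Finite α]
    (h : ∀ c : K, c ≠ 1 → Nat.card (centralizer {c}) ∣ Nat.card (fixedBy α c)) :
    Nat.card K ∣ Nat.card α := by
  classical
  have := Fintype.ofFinite K
  have := Fintype.ofFinite α
  let f : K → ℕ := fun c => if c = 1 then 0 else Nat.card (fixedBy α c)
  have hsplit : ∑ c : K, Nat.card (fixedBy α c) = Nat.card α + ∑ c, f c := by
    have hc : ∀ c : K, Nat.card (fixedBy α c) = (if c = 1 then Nat.card α else 0) + f c := by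
      intro c
      by_cases hc : c = 1 <;> simp [f, hc, fixedBy_one_eq_univ]
    simp only [hc, Finset.sum_add_distrib, Finset.sum_ite_eq', Finset.mem_univ, if_true]
  have hburnside : Nat.card K ∣ ∑ c : K, Nat.card (fixedBy α c) := by
    simp only [Nat.card_eq_fintype_card, sum_card_fixedBy_eq_card_orbits_mul_card_group]
    exact dvd_mul_left _ _
  have hclass : Nat.card K ∣ ∑ c, f c := by
    rw [← Nat.card_congr ConjAct.ofConjAct.toEquiv]
    refine card_dvd_sum_of_card_stabilizer_dvd (fun k c => ?_) (fun c => ?_)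
    · simp only [f, ConjAct.smul_def, conj_eq_one_iff, ← smul_fixedBy, Set.natCard_smul_set]
    · rw [ConjAct.card_stabilizer_eq_card_centralizer]
      by_cases hc : c = 1
      · simp [f, hc]
      · simpa [f, hc] using h c hc
  rw [hsplit] at hburnside
  exact (Nat.dvd_add_left hclass).mp hburnside

section

variable {G : Type*} [Group G]

theorem Subgroup.card_subgroupOf_comm (H K : Subgroup G) :
    Nat.card (H.subgroupOf K) = Nat.card (K.subgroupOf H) := by
  rw [← inf_subgroupOf_right H K, ← inf_subgroupOf_right K H, inf_comm,
    Nat.card_congr (subgroupOfEquivOfLe inf_le_right).toEquiv,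
    Nat.card_congr (subgroupOfEquivOfLe inf_le_left).toEquiv]

theorem Subgroup.centralizer_singleton_eq_subgroupOf (K : Subgroup G) (c : K) :
    centralizer {c} = (centralizer {(c : G)}).subgroupOf K := by
  ext k
  simp only [mem_subgroupOf, mem_centralizer_singleton_iff, Subtype.ext_iff, coe_mul]

theorem QuotientGroup.mk_mem_image_mk_iff {N : Subgroup G} {S : Set G}
    (hS : ∀ s ∈ S, ∀ z ∈ N, s * z ∈ S) {x : G} :
    (x : G ⧸ N) ∈ ((↑) : G → G ⧸ N) '' S ↔ x ∈ S := by
  refine ⟨fun ⟨s, hs, hsx⟩ => ?_, fun hx => ⟨x, hx, rfl⟩⟩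
  simpa using hS s hs _ (QuotientGroup.eq.mp hsx)

theorem Subgroup.card_eq_card_mul_card_image_mk (N : Subgroup G) {t : Set G}
    (ht : ∀ x ∈ t, ∀ z ∈ N, x * z ∈ t) :
    Nat.card t = Nat.card N * Nat.card (((↑) : G → G ⧸ N) '' t) := by
  have htN : t * (N : Set G) = t :=
    (Set.mul_subset_iff.mpr fun x hx z hz => ht x hx z hz).antisymm
      fun x hx => ⟨x, hx, 1, N.one_mem, mul_one x⟩
  rw [← card_mul_eq_card_subgroup_mul_card_quotient, htN]

variable {K : Subgroup G} {S : Set G}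

theorem card_dvd_card_zpow_mem_of_quotient {N : Subgroup G} [N.Normal] (hNK : N ≤ K)
    (hright : ∀ s ∈ S, ∀ k ∈ K, s * k ∈ S) (n : ℤ)
    (h : Nat.card (K.map (QuotientGroup.mk' N)) ∣
      Nat.card {y : G ⧸ N // y ^ n ∈ ((↑) : G → G ⧸ N) '' S}) :
    Nat.card K ∣ Nat.card {x : G // x ^ n ∈ S} := by
  have hSN : ∀ s ∈ S, ∀ z ∈ N, s * z ∈ S := fun s hs z hz => hright s hs z (hNK hz)
  have hmem : ∀ x : G, (x : G ⧸ N) ^ n ∈ ((↑) : G → G ⧸ N) '' S ↔ x ^ n ∈ S := fun x => by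
    rw [← QuotientGroup.mk_zpow, QuotientGroup.mk_mem_image_mk_iff hSN]
  have hXN : ∀ x ∈ {x : G | x ^ n ∈ S}, ∀ z ∈ N, x * z ∈ {x : G | x ^ n ∈ S} :=
    fun x hx z hz => by
      rw [Set.mem_ofPred_eq, ← hmem, QuotientGroup.mk_mul_of_mem x hz, hmem]
      exact hx
  have himage :
      ((↑) : G → G ⧸ N) '' {x : G | x ^ n ∈ S} = {y | y ^ n ∈ ((↑) : G → G ⧸ N) '' S} := by
    ext y
    obtain ⟨x, rfl⟩ := QuotientGroup.mk_surjective y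
    rw [QuotientGroup.mk_mem_image_mk_iff hXN, Set.mem_ofPred_eq, Set.mem_ofPred_eq, hmem]
  have hK := N.card_eq_card_mul_card_image_mk (t := K) fun k hk z hz => K.mul_mem hk (hNK hz)
  have hX := N.card_eq_card_mul_card_image_mk hXN
  rw [himage] at hX
  rw [← QuotientGroup.coe_mk', ← coe_map] at hK
  change Nat.card (K : Set G) ∣ Nat.card {x : G | x ^ n ∈ S}
  rw [hK, hX]
  exact Nat.mul_dvd_mul_left _ h

theorem card_dvd_card_zpow_mem_of_centralizer [Finite G] (hleft : ∀ k ∈ K, ∀ s ∈ S, k * s ∈ S)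
    (hright : ∀ s ∈ S, ∀ k ∈ K, s * k ∈ S) (n : ℤ)
    (h : ∀ c : K, c ≠ 1 → Nat.card (K.subgroupOf (centralizer {(c : G)})) ∣
      Nat.card {y : centralizer {(c : G)} // y ^ n ∈ ((↑) : _ → G) ⁻¹' S}) :
    Nat.card K ∣ Nat.card {x : G // x ^ n ∈ S} := by
  let : MulAction K G := MulAction.compHom G (MulAut.conj.comp K.subtype)
  have hsmul : ∀ (k : K) (x : G), k • x = k * x * (k : G)⁻¹ := fun _ _ => rfl
  let X : SubMulAction K G :=
    { carrier := {x | x ^ n ∈ S}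
      smul_mem' := fun k x hx => by
        rw [Set.mem_ofPred_eq, hsmul, conj_zpow]
        exact hright _ (hleft _ k.2 _ hx) _ (inv_mem k.2) }
  change Nat.card K ∣ Nat.card X
  refine card_dvd_card_of_card_centralizer_dvd_card_fixedBy fun c hc => ?_
  have hfix : Nat.card (fixedBy X c) =
      Nat.card {y : centralizer {(c : G)} // y ^ n ∈ ((↑) : _ → G) ⁻¹' S} := by
    refine Nat.card_congr
      { toFun := fun x => ⟨⟨x.1.1, ?_⟩, ?_⟩
        invFun := fun y => ⟨⟨y.1.1, y.2⟩, Subtype.ext ?_⟩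
        left_inv := fun _ => rfl
        right_inv := fun _ => rfl }
    · exact mem_centralizer_singleton_iff.mpr
        (mul_inv_eq_iff_eq_mul.mp (congrArg Subtype.val x.2)).symm
    · exact x.1.2
    · exact mul_inv_eq_of_eq_mul (mem_centralizer_singleton_iff.mp y.1.2).symm
  rw [centralizer_singleton_eq_subgroupOf, card_subgroupOf_comm, hfix]
  exact h c hc

theorem card_dvd_card_zpow_mem [Finite G] (hleft : ∀ k ∈ K, ∀ s ∈ S, k * s ∈ S)
    (hright : ∀ s ∈ S, ∀ k ∈ K, s * k ∈ S) (n : ℤ) :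
    Nat.card K ∣ Nat.card {x : G // x ^ n ∈ S} := by
  induction hG : Nat.card G using Nat.strong_induction_on generalizing G with
  | _ m IH =>
  subst hG
  by_cases hZ : center G ⊓ K = ⊥
  · refine card_dvd_card_zpow_mem_of_centralizer hleft hright n fun c hc => ?_
    have hC : centralizer {(c : G)} ≠ ⊤ := fun hC => hc <| Subtype.ext <| by
      have : (c : G) ∈ center G ⊓ K := ⟨centralizer_eq_top_iff_subset.mp hC rfl, c.2⟩
      simpa [hZ] using this
    exact IH _ (lt_of_le_of_ne (card_le_card_group _) (mt (card_eq_iff_eq_top _).mp hC))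
      (fun k hk s hs => hleft _ hk _ hs) (fun s hs k hk => hright _ hs _ hk) rfl
  · have : (center G ⊓ K).Normal :=
      ⟨fun z hz g => by rwa [mem_center_iff.mp hz.1 g, mul_inv_cancel_right]⟩
    refine card_dvd_card_zpow_mem_of_quotient (N := center G ⊓ K) inf_le_right hright n
      (IH _ ?_ ?_ ?_ rfl)
    · rw [card_eq_card_quotient_mul_card_subgroup (center G ⊓ K)]
      exact lt_mul_of_one_lt_right Nat.card_pos ((one_lt_card_iff_ne_bot _).mpr hZ)
    · rintro _ ⟨k, hk, rfl⟩ _ ⟨s, hs, rfl⟩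
      exact ⟨k * s, hleft k hk s hs, rfl⟩
    · rintro _ ⟨s, hs, rfl⟩ _ ⟨k, hk, rfl⟩
      exact ⟨s * k, hright s hs k hk, rfl⟩

end

open DoubleCoset in
theorem sato_asai (G : Type*) [Group G] [Fintype G] (H : Subgroup G) (g : G) (n : ℤ) :
    Nat.card H ∣ Nat.card {x : G // ∃ h₁ ∈ H, ∃ h₂ ∈ H, x ^ n = h₁ * g * h₂} := by
  have hleft : ∀ k ∈ H, ∀ s ∈ doubleCoset g H H, k * s ∈ doubleCoset g H H := by
    intro k hk s hs
    obtain ⟨a, ha, b, hb, rfl⟩ := mem_doubleCoset.mp hs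
    exact mem_doubleCoset.mpr ⟨k * a, H.mul_mem hk ha, b, hb, by simp only [mul_assoc]⟩
  have hright : ∀ s ∈ doubleCoset g H H, ∀ k ∈ H, s * k ∈ doubleCoset g H H := by
    intro s hs k hk
    obtain ⟨a, ha, b, hb, rfl⟩ := mem_doubleCoset.mp hs
    exact mem_doubleCoset.mpr ⟨a, ha, b * k, H.mul_mem hb hk, by simp only [mul_assoc]⟩
  simpa only [mem_doubleCoset, SetLike.mem_coe] using card_dvd_card_zpow_mem hleft hright n
end

section
/- Let G be a finite group and g ∈ G, and n a positive integer. Then the number of elements x in G with x^n = g is divisible by gcd(n, |C_G(g)|), where C_G(g) is the centralizer of g in G. -/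
/-!
Every root of `x ^ n = g` commutes with `g`, so we may pass to `C_G(g)`, where `g` is central, and
show that `p ^ k` divides the number of roots whenever `p ^ k` divides both `n` and `|G|`.

Write each root uniquely as `x = a * z` with `a` a `p`-element and `z` a commuting `p'`-element, and
sum over the conjugacy classes of `z`. The class of `z` contributes `|G : C(z)|` times the number of
`p`-elements `a ∈ C(z)` with `a ^ (p ^ c) = h`, where `p ^ c` is the `p`-part of `n` and `h` is a
`p`-element of `C(z)`. That number is divisible by `p ^ min c (v_p |C(z)|)`: for `h ≠ 1` the roots
of `h` fall into cyclic groups `⟨y⟩`, each containing exactly `p ^ c` of them; for `h = 1` it is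
Frobenius' theorem for prime powers, which follows by induction on `|G|` from the same
decomposition of `G` itself, counting all `x ∈ G`.
-/

open Finset Subgroup

namespace Frobenius

theorem card_eq_sum_card_fiber {α β : Type*} [Finite α] [Fintype β] (Q : α → Prop)
    (f : α → β) : Nat.card {x // Q x} = ∑ b, Nat.card {x // Q x ∧ f x = b} := by
  rw [← Nat.card_sigma]
  exact Nat.card_congr <| (Equiv.sigmaFiberEquiv fun x : {x // Q x} => f x).symm.trans <|
    Equiv.sigmaCongrRight fun b => Equiv.subtypeSubtypeEquivSubtypeInter Q (f · = b)

theorem card_pow_eq_one_of_isCyclic {α : Type*} [Group α] [Finite α] [IsCyclic α] {d : ℕ}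
    (hd : d ∣ Nat.card α) : Nat.card {a : α // a ^ d = 1} = d := by
  classical
  cases nonempty_fintype α
  rw [Nat.card_eq_fintype_card] at hd
  have hd0 : d ≠ 0 := ne_zero_of_dvd_ne_zero Fintype.card_ne_zero hd
  rw [Nat.card_eq_fintype_card, Fintype.card_subtype]
  calc #{a : α | a ^ d = 1} = ∑ m ∈ d.divisors, #{a : α | orderOf a = m} := by
        convert (sum_card_orderOf_eq_card_pow_eq_one (G := α) hd0).symm using 2
    _ = ∑ m ∈ d.divisors, m.totient := sum_congr rfl fun m hm =>
        IsCyclic.card_orderOf_eq_totient ((Nat.dvd_of_mem_divisors hm).trans hd)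
    _ = d := Nat.sum_totient d

theorem dvd_sum_of_dvd_index_stabilizer_mul {H X : Type*} [Group H] [MulAction H X] [Fintype X]
    {m : ℕ} (t : X → ℕ) (ht : ∀ (g : H) x, t (g • x) = t x)
    (hdvd : ∀ x, m ∣ (MulAction.stabilizer H x).index * t x) : m ∣ ∑ x, t x := by
  classical
  set π := Quotient.mk (MulAction.orbitRel H X)
  rw [← sum_fiberwise univ π t]
  refine dvd_sum fun ω _ => ?_
  obtain ⟨x, rfl⟩ := Quotient.exists_rep ω
  have horbit (y : X) : π y = π x ↔ y ∈ MulAction.orbit H x := by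
    rw [Quotient.eq, MulAction.orbitRel_apply]
  have hconst : ∀ y ∈ ({y | π y = π x} : Finset X), t y = t x := by
    intro y hy
    obtain ⟨g, rfl⟩ := (horbit y).1 (mem_filter.1 hy).2
    exact ht g x
  have hcard : #{y | π y = π x} = (MulAction.stabilizer H x).index := by
    rw [MulAction.index_stabilizer, Set.ncard_eq_toFinset_card']
    congr 1
    ext y
    simp [horbit]
  rw [sum_congr rfl hconst, sum_const, smul_eq_mul, hcard]
  exact hdvd x

variable {G : Type*} [Group G]

theorem pow_eq_pow_of_modEq {x : G} {N k l : ℕ} (hx : x ^ N = 1) (h : k ≡ l [MOD N]) :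
    x ^ k = x ^ l :=
  pow_eq_pow_iff_modEq.2 (h.of_dvd (orderOf_dvd_of_pow_eq_one hx))

theorem dvd_sum_of_dvd_index_centralizer_mul [Fintype G] {m : ℕ} (t : G → ℕ)
    (ht : ∀ w z, t (w * z * w⁻¹) = t z) (hdvd : ∀ z, m ∣ (centralizer {z}).index * t z) :
    m ∣ ∑ z, t z := by
  refine dvd_sum_of_dvd_index_stabilizer_mul (H := ConjAct G) t (fun g z => ?_) fun z => ?_
  · rw [ConjAct.smul_def]
    exact ht _ z
  · have h : (centralizer {z}).index = (MulAction.stabilizer (ConjAct G) z).index := by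
      rw [centralizer_eq_comap_stabilizer]
      exact index_comap_of_surjective _ fun x => ⟨ConjAct.ofConjAct x, rfl⟩
    exact h ▸ hdvd z

theorem conj_mem_center_iff {w z : G} : w * z * w⁻¹ ∈ center G ↔ z ∈ center G := by
  refine ⟨fun h => ?_, fun h => (center G).normal_of_characteristic.conj_mem z h w⟩
  simpa [mul_assoc] using (center G).normal_of_characteristic.conj_mem _ h w⁻¹

theorem card_commute_eq_card_centralizer (z : G) (R : G → Prop) :
    Nat.card {a // Commute a z ∧ R a} = Nat.card {a : centralizer {z} // R a} :=
  Nat.card_congr <|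
    (Equiv.subtypeEquivRight fun _ => and_congr_left' mem_centralizer_singleton_iff).symm.trans
      (Equiv.subtypeSubtypeEquivSubtypeInter (· ∈ centralizer {z}) R).symm

theorem card_pow_eq_eq_card_centralizer (g : G) (n : ℕ) :
    Nat.card {x : G // x ^ n = g} =
      Nat.card {x : centralizer {g} // x ^ n = ⟨g, mem_centralizer_singleton_iff.2 rfl⟩} := by
  calc Nat.card {x : G // x ^ n = g} = Nat.card {x // Commute x g ∧ x ^ n = g} :=
        Nat.card_congr <| Equiv.subtypeEquivRight fun x =>
          (and_iff_right_of_imp fun hx => hx ▸ Commute.self_pow x n).symm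
    _ = _ := by
      rw [card_commute_eq_card_centralizer]
      exact Nat.card_congr <| Equiv.subtypeEquivRight fun x => by
        rw [Subtype.ext_iff, Subgroup.coe_pow]

theorem mem_center_centralizer_self (g : G) :
    (⟨g, mem_centralizer_singleton_iff.2 rfl⟩ : centralizer {g}) ∈ center (centralizer {g}) :=
  mem_center_iff.2 fun y => Subtype.ext (mem_centralizer_singleton_iff.1 y.2)

variable (p : ℕ) in
def IsPElement (x : G) : Prop := ∃ k, x ^ p ^ k = 1

variable {p : ℕ}

theorem isPElement_coe {K : Subgroup G} {a : K} : IsPElement p (a : G) ↔ IsPElement p a := by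
  simp only [IsPElement, ← Subgroup.coe_pow, OneMemClass.coe_eq_one]

theorem isPElement_map_iff {G' : Type*} [Group G'] (φ : G ≃* G') {a : G} :
    IsPElement p (φ a) ↔ IsPElement p a := by
  simp only [IsPElement, ← map_pow, map_eq_one_iff φ φ.injective]

theorem IsPElement.pow {a : G} (ha : IsPElement p a) (n : ℕ) : IsPElement p (a ^ n) := by
  obtain ⟨k, hk⟩ := ha
  exact ⟨k, by rw [← pow_mul, mul_comm, pow_mul, hk, one_pow]⟩

theorem IsPElement.of_pow_prime_pow {a : G} {c : ℕ} (ha : IsPElement p (a ^ p ^ c)) :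
    IsPElement p a := by
  obtain ⟨k, hk⟩ := ha
  exact ⟨c + k, by rw [pow_add, pow_mul, hk]⟩

theorem card_commute_isPElement_conj (Q : G → Prop) (hQ : ∀ w x, Q (w * x * w⁻¹) ↔ Q x)
    (w z : G) :
    Nat.card {a // Commute a (w * z * w⁻¹) ∧ IsPElement p a ∧ (orderOf (w * z * w⁻¹)).Coprime p ∧
      Q (a * (w * z * w⁻¹))} =
      Nat.card {a // Commute a z ∧ IsPElement p a ∧ (orderOf z).Coprime p ∧ Q (a * z)} := by
  set φ := MulAut.conj w
  refine (Nat.card_congr (Equiv.subtypeEquiv φ.toEquiv fun a => ?_)).symm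
  have hcomm : Commute (φ a) (φ z) ↔ Commute a z :=
    ⟨fun h => by simpa using h.map φ.symm, fun h => h.map φ⟩
  rw [← MulAut.conj_apply, MulEquiv.toEquiv_eq_coe, MulEquiv.coe_toEquiv, ← map_mul, hcomm,
    isPElement_map_iff, MulEquiv.orderOf_eq, MulAut.conj_apply, hQ]

variable [hp : Fact p.Prime]

theorem isPElement_iff_pow_eq_one [Finite G] {x : G} :
    IsPElement p x ↔ x ^ p ^ (Nat.card G).factorization p = 1 := by
  refine ⟨fun ⟨k, hk⟩ => ?_, fun h => ⟨_, h⟩⟩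
  obtain ⟨j, -, hj⟩ := (Nat.dvd_prime_pow hp.out).1 (orderOf_dvd_of_pow_eq_one hk)
  rw [← orderOf_dvd_iff_pow_eq_one, hj]
  refine pow_dvd_pow p ((hp.out.pow_dvd_iff_le_factorization Nat.card_pos.ne').1 ?_)
  exact hj ▸ orderOf_dvd_natCard x

theorem coprime_orderOf_iff_pow_eq_one [Finite G] {z : G} :
    (orderOf z).Coprime p ↔ z ^ (Nat.card G / p ^ (Nat.card G).factorization p) = 1 := by
  have hM := Nat.coprime_ordCompl hp.out (Nat.card_pos (α := G)).ne'
  rw [← orderOf_dvd_iff_pow_eq_one]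
  refine ⟨fun h => ?_, fun h => (hM.coprime_dvd_right h).symm⟩
  refine (h.pow_right ((Nat.card G).factorization p)).dvd_of_dvd_mul_left ?_
  rw [Nat.ordProj_mul_ordCompl_eq_self]
  exact orderOf_dvd_natCard z

theorem pow_prime_pow_eq_one_iff_min [Finite G] {y : G} (hy : IsPElement p y) (c : ℕ) :
    y ^ p ^ c = 1 ↔ y ^ p ^ min c ((Nat.card G).factorization p) = 1 := by
  refine ⟨fun h => ?_, fun h => ?_⟩
  · obtain ⟨j, hjc, hj⟩ := (Nat.dvd_prime_pow hp.out).1 (orderOf_dvd_of_pow_eq_one h)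
    have hjG := (isPElement_iff_pow_eq_one.1 hy)
    rw [← orderOf_dvd_iff_pow_eq_one, hj, Nat.pow_dvd_pow_iff_le_right hp.out.one_lt] at hjG
    rw [← orderOf_dvd_iff_pow_eq_one, hj]
    exact pow_dvd_pow p (le_min hjc hjG)
  · rw [← Nat.sub_add_cancel (min_le_left c ((Nat.card G).factorization p)), pow_add, mul_comm,
      pow_mul, h, one_pow]

theorem orderOf_eq_of_pow_prime_pow_eq {c e : ℕ} {y h : G} (hy : y ^ p ^ c = h)
    (hh : orderOf h = p ^ (e + 1)) : orderOf y = p ^ (c + e + 1) := by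
  apply orderOf_eq_prime_pow
  · rw [pow_add, pow_mul, hy]
    refine pow_ne_one_of_lt_orderOf (pow_ne_zero _ hp.out.ne_zero) ?_
    exact hh ▸ Nat.pow_lt_pow_right hp.out.one_lt (lt_add_one e)
  · rw [add_assoc, pow_add, pow_mul, hy, ← hh, pow_orderOf_eq_one]

/-- The roots of `h` generating `⟨y₀⟩` are the translates of `y₀` by the `p ^ c`-torsion of the
cyclic group `⟨y₀⟩`. -/
theorem card_pow_eq_and_zpowers_eq [Finite G] {c e : ℕ} {h y₀ : G}
    (hh : orderOf h = p ^ (e + 1)) (hy₀ : y₀ ^ p ^ c = h) :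
    Nat.card {y // y ^ p ^ c = h ∧ zpowers y = zpowers y₀} = p ^ c := by
  have commute_of_mem {w : G} (hw : w ∈ zpowers y₀) : Commute y₀ w := by
    obtain ⟨j, rfl⟩ := hw
    exact (Commute.refl y₀).zpow_right j
  have mem_of {y : G} (hy : zpowers y = zpowers y₀) : y ∈ zpowers y₀ := hy ▸ mem_zpowers y
  let f : {y // y ^ p ^ c = h ∧ zpowers y = zpowers y₀} ≃ {w : zpowers y₀ // w ^ p ^ c = 1} :=
    { toFun y := ⟨⟨y₀⁻¹ * y, mul_mem (inv_mem (mem_zpowers y₀)) (mem_of y.2.2)⟩, by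
        ext
        simp [(commute_of_mem (mem_of y.2.2)).inv_left.mul_pow, hy₀, y.2.1]⟩
      invFun w := ⟨y₀ * w, by
        have hroot : (y₀ * w) ^ p ^ c = h := by
          rw [(commute_of_mem w.1.2).mul_pow, hy₀, ← Subgroup.coe_pow, w.2, Subgroup.coe_one,
            mul_one]
        refine ⟨hroot, eq_of_le_of_card_ge ?_ ?_⟩
        · exact zpowers_le.2 (mul_mem (mem_zpowers y₀) w.1.2)
        · rw [Nat.card_zpowers, Nat.card_zpowers, orderOf_eq_of_pow_prime_pow_eq hroot hh,
            orderOf_eq_of_pow_prime_pow_eq hy₀ hh]⟩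
      left_inv y := by ext; simp
      right_inv w := by ext; simp }
  rw [Nat.card_congr f]
  refine card_pow_eq_one_of_isCyclic ?_
  rw [Nat.card_zpowers, orderOf_eq_of_pow_prime_pow_eq hy₀ hh, add_assoc, pow_add]
  exact dvd_mul_right _ _

theorem prime_pow_dvd_card_pow_eq [Finite G] {c e : ℕ} {h : G}
    (hh : orderOf h = p ^ (e + 1)) : p ^ c ∣ Nat.card {y // y ^ p ^ c = h} := by
  have := Fintype.ofFinite (Subgroup G)
  rw [card_eq_sum_card_fiber _ zpowers]
  refine Finset.dvd_sum fun Z _ => ?_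
  rcases isEmpty_or_nonempty {y // y ^ p ^ c = h ∧ zpowers y = Z} with _ | ⟨⟨y₀, hy₀, rfl⟩⟩
  · rw [Nat.card_of_isEmpty]
    exact dvd_zero _
  · rw [card_pow_eq_and_zpowers_eq hh hy₀]

theorem prime_pow_dvd_card_isPElement_pow_eq_of_ne_one [Finite G] {h : G} (hh : h ≠ 1)
    (c : ℕ) : p ^ c ∣ Nat.card {y // IsPElement p y ∧ y ^ p ^ c = h} := by
  rcases isEmpty_or_nonempty {y // IsPElement p y ∧ y ^ p ^ c = h} with _ | ⟨⟨y₀, hy₀, rfl⟩⟩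
  · rw [Nat.card_of_isEmpty]
    exact dvd_zero _
  obtain ⟨k, hk⟩ := hy₀.pow (p ^ c)
  obtain ⟨_ | e, -, he⟩ := (Nat.dvd_prime_pow hp.out).1 (orderOf_dvd_of_pow_eq_one hk)
  · exact absurd (orderOf_eq_one_iff.1 he) hh
  have hroots : Nat.card {y // IsPElement p y ∧ y ^ p ^ c = y₀ ^ p ^ c} =
      Nat.card {y // y ^ p ^ c = y₀ ^ p ^ c} :=
    Nat.card_congr <| Equiv.subtypeEquivRight fun y => and_iff_right_of_imp fun hy =>
      IsPElement.of_pow_prime_pow (by rw [hy]; exact hy₀.pow _)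
  rw [hroots]
  exact prime_pow_dvd_card_pow_eq he

theorem card_eq_sum_card_commute_isPElement [Fintype G] (Q : G → Prop) :
    Nat.card {x // Q x} = ∑ z, Nat.card
      {a // Commute a z ∧ IsPElement p a ∧ (orderOf z).Coprime p ∧ Q (a * z)} := by
  set P := p ^ (Nat.card G).factorization p
  set M := Nat.card G / P
  have hcop : P.Coprime M := (Nat.coprime_ordCompl hp.out Nat.card_pos.ne').pow_left _
  have hPM : P * M = Nat.card G := Nat.ordProj_mul_ordCompl_eq_self _ _
  have hG (x : G) : x ^ (P * M) = 1 := hPM ▸ pow_card_eq_one'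
  -- `x ^ τ` is the `p'`-part of `x`, and `x * (x ^ τ)⁻¹` its `p`-part.
  obtain ⟨τ, hτP, hτM⟩ := Nat.chineseRemainder hcop 0 1
  rw [card_eq_sum_card_fiber Q (· ^ τ)]
  refine sum_congr rfl fun z _ => Nat.card_congr (Equiv.subtypeEquiv (Equiv.mulRight z⁻¹) ?_)
  intro x
  simp only [Equiv.coe_mulRight, inv_mul_cancel_right, isPElement_iff_pow_eq_one,
    coprime_orderOf_iff_pow_eq_one]
  constructor
  · rintro ⟨hQ, rfl⟩
    have hx : Commute x (x ^ τ) := Commute.self_pow x τ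
    refine ⟨hx.mul_left (Commute.refl _).inv_left, ?_, ?_, hQ⟩
    · rw [hx.inv_right.mul_pow, inv_pow, ← pow_mul',
        pow_eq_pow_of_modEq (hG x) (hτM.mul_left' P), mul_one, mul_inv_cancel]
    · rw [← pow_mul, pow_eq_pow_of_modEq (hG x) (hτP.mul_right' M), zero_mul, pow_zero]
  · rintro ⟨hc, ha, hz, hQ⟩
    refine ⟨hQ, ?_⟩
    rw [← inv_mul_cancel_right x z, hc.mul_pow, pow_eq_pow_of_modEq ha hτP,
      pow_eq_pow_of_modEq hz hτM, pow_zero, pow_one, one_mul]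

theorem prime_pow_dvd_index_mul [Finite G] (K : Subgroup G) {k s : ℕ}
    (hk : p ^ k ∣ Nat.card G) (hs : p ^ min k ((Nat.card K).factorization p) ∣ s) :
    p ^ k ∣ K.index * s := by
  rcases eq_or_ne s 0 with rfl | hs0
  · simp
  have hi : K.index ≠ 0 := FiniteIndex.index_ne_zero
  have hK : Nat.card K ≠ 0 := Nat.card_pos.ne'
  rw [hp.out.pow_dvd_iff_le_factorization hs0] at hs
  rw [← card_mul_index K, hp.out.pow_dvd_iff_le_factorization (mul_ne_zero hK hi),
    Nat.factorization_mul hK hi] at hk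
  rw [hp.out.pow_dvd_iff_le_factorization (mul_ne_zero hi hs0), Nat.factorization_mul hi hs0]
  simp only [Finsupp.add_apply] at hk ⊢
  omega

theorem not_prime_dvd_card_center_coprime [Finite G] :
    ¬ p ∣ Nat.card {z // z ∈ center G ∧ (orderOf z).Coprime p} := by
  let K : Subgroup G :=
    { carrier := {z | z ∈ center G ∧ (orderOf z).Coprime p}
      one_mem' := ⟨one_mem _, by simp⟩
      mul_mem' := fun {a b} ha hb => ⟨mul_mem ha.1 hb.1,
        Nat.Coprime.coprime_dvd_left
          (Commute.orderOf_mul_dvd_mul_orderOf (mem_center_iff.1 ha.1 b).symm)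
          (Nat.Coprime.mul_left ha.2 hb.2)⟩
      inv_mem' := fun {a} ha => ⟨inv_mem ha.1, by simpa using ha.2⟩ }
  intro hdvd
  obtain ⟨k, hk⟩ := exists_prime_orderOf_dvd_card' (G := K) p hdvd
  have := k.2.2
  rw [orderOf_submonoid, hk, Nat.coprime_self] at this
  exact hp.out.one_lt.ne' this

open scoped Classical in
theorem card_eq_card_center_mul_add_sum_noncenter [Fintype G] :
    Nat.card G = Nat.card {z // z ∈ center G ∧ (orderOf z).Coprime p} *
        Nat.card {x : G // IsPElement p x} +
      ∑ z, if z ∈ center G then 0 else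
        Nat.card {a // Commute a z ∧ IsPElement p a ∧ (orderOf z).Coprime p} := by
  set N := Nat.card {x : G // IsPElement p x}
  set t : G → ℕ := fun z => Nat.card {a // Commute a z ∧ IsPElement p a ∧ (orderOf z).Coprime p}
  have hsum : Nat.card G = ∑ z, t z := by
    have := card_eq_sum_card_commute_isPElement (p := p) fun _ : G => True
    simp only [and_true] at this
    rw [← this]
    exact (Nat.card_congr (Equiv.subtypeUnivEquiv fun _ => trivial)).symm
  have hcentral : ∑ z, (if z ∈ center G then t z else 0) =
      ∑ z, if z ∈ center G ∧ (orderOf z).Coprime p then N else 0 := by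
    refine sum_congr rfl fun z _ => ?_
    by_cases hz : z ∈ center G
    · have hcomm (a : G) : Commute a z := mem_center_iff.1 hz a
      by_cases hc : (orderOf z).Coprime p
      · simp only [t, N, hz, hcomm, eq_true hc, true_and, and_true, if_true]
      · simp [t, hz, hc]
    · simp [hz]
  have hcount : ∑ z, (if z ∈ center G ∧ (orderOf z).Coprime p then N else 0) =
      Nat.card {z // z ∈ center G ∧ (orderOf z).Coprime p} * N := by
    rw [← sum_filter, sum_const, smul_eq_mul]
    congr 1
    rw [Nat.card_eq_fintype_card, Fintype.card_subtype]
  rw [hsum, ← hcount, ← hcentral, ← sum_add_distrib]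
  exact sum_congr rfl fun z _ => by split_ifs <;> simp only [add_zero, zero_add, t]

theorem prime_pow_dvd_card_isPElement [Finite G] :
    p ^ (Nat.card G).factorization p ∣ Nat.card {x : G // IsPElement p x} := by
  induction hN : Nat.card G using Nat.strong_induction_on generalizing G with
  | _ N ih =>
  subst hN
  cases nonempty_fintype G
  classical
  set t : G → ℕ := fun z =>
    if z ∈ center G then 0 else
      Nat.card {a // Commute a z ∧ IsPElement p a ∧ (orderOf z).Coprime p}
  have hnoncentral : p ^ (Nat.card G).factorization p ∣ ∑ z, t z := by
    refine dvd_sum_of_dvd_index_centralizer_mul _ (fun w z => ?_) fun z => ?_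
    · simp only [t, conj_mem_center_iff]
      split_ifs
      · rfl
      · simpa only [and_true] using
          card_commute_isPElement_conj (p := p) (fun _ => True) (fun _ _ => Iff.rfl) w z
    · by_cases hz : z ∈ center G
      · simp [t, hz]
      refine prime_pow_dvd_index_mul _ (Nat.ordProj_dvd _ _) ?_
      by_cases hc : (orderOf z).Coprime p
      · have hlt : Nat.card (centralizer {z}) < Nat.card G := by
          refine lt_of_le_of_ne (card_le_card_group _) fun h => hz ?_
          rw [card_eq_iff_eq_top, centralizer_eq_top_iff_subset] at h
          exact h rfl
        have htz : t z = Nat.card {a : centralizer {z} // IsPElement p a} := by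
          simp only [t, hz, if_false, eq_true hc, and_true, card_commute_eq_card_centralizer,
            isPElement_coe]
        rw [htz]
        exact (pow_dvd_pow p (min_le_right _ _)).trans (ih _ hlt rfl)
      · simp [t, hc]
  -- The central `p'`-elements form a `p'`-group, so their number is prime to `p`.
  have hcop := Nat.Coprime.pow_left ((Nat.card G).factorization p)
    ((Nat.Prime.coprime_iff_not_dvd hp.out).2 (not_prime_dvd_card_center_coprime (G := G)))
  refine hcop.dvd_of_dvd_mul_left ((Nat.dvd_add_left hnoncentral).1 ?_)
  rw [← card_eq_card_center_mul_add_sum_noncenter]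
  exact Nat.ordProj_dvd _ _

theorem prime_pow_dvd_card_isPElement_pow_eq_one [Finite G] {a : ℕ}
    (ha : a ≤ (Nat.card G).factorization p) :
    p ^ a ∣ Nat.card {y : G // IsPElement p y ∧ y ^ p ^ a = 1} := by
  cases nonempty_fintype G
  classical
  have hsum := card_eq_sum_card_fiber (IsPElement p) fun y : G => y ^ p ^ a
  rw [← add_sum_erase _ _ (mem_univ 1)] at hsum
  have hrest :
      p ^ a ∣ ∑ k ∈ univ.erase (1 : G), Nat.card {y // IsPElement p y ∧ y ^ p ^ a = k} :=
    dvd_sum fun k hk => prime_pow_dvd_card_isPElement_pow_eq_of_ne_one (ne_of_mem_erase hk) a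
  have htotal := (pow_dvd_pow p ha).trans (prime_pow_dvd_card_isPElement (G := G))
  rw [hsum] at htotal
  exact (Nat.dvd_add_left hrest).1 htotal

theorem prime_pow_dvd_card_isPElement_pow_eq [Finite G] (h : G) (c : ℕ) :
    p ^ min c ((Nat.card G).factorization p) ∣
      Nat.card {y // IsPElement p y ∧ y ^ p ^ c = h} := by
  rcases eq_or_ne h 1 with rfl | hh
  · rw [Nat.card_congr (Equiv.subtypeEquivRight fun y =>
      and_congr_right fun hy => pow_prime_pow_eq_one_iff_min hy c)]
    exact prime_pow_dvd_card_isPElement_pow_eq_one (min_le_right _ _)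
  · exact (pow_dvd_pow p (min_le_left _ _)).trans
      (prime_pow_dvd_card_isPElement_pow_eq_of_ne_one hh c)

theorem card_isPElement_pow_mul_eq [Finite G] {m v : ℕ} (hv : v.Coprime p) (h : G) :
    Nat.card {a // IsPElement p a ∧ a ^ (m * v) = h} =
      Nat.card {b // IsPElement p b ∧ b ^ m = h} := by
  set P := p ^ (Nat.card G).factorization p
  set v' := v ^ (P.totient - 1)
  have hvv' : v * v' ≡ 1 [MOD P] := by
    rw [← pow_succ', Nat.sub_add_cancel (Nat.totient_pos.2 (pow_pos hp.out.pos _))]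
    exact Nat.ModEq.pow_totient (hv.pow_right _)
  have hinv {b : G} (hb : IsPElement p b) : b ^ (v * v') = b := by
    rw [pow_eq_pow_of_modEq (isPElement_iff_pow_eq_one.1 hb) hvv', pow_one]
  exact Nat.card_congr
    { toFun a := ⟨a.1 ^ v, a.2.1.pow v, by rw [← pow_mul, mul_comm v m, a.2.2]⟩
      invFun b := ⟨b.1 ^ v', b.2.1.pow v', by
        rw [← pow_mul, show v' * (m * v) = v * v' * m by ring, pow_mul, hinv b.2.1, b.2.2]⟩
      left_inv a := Subtype.ext <| show (a.1 ^ v) ^ v' = a.1 by rw [← pow_mul, hinv a.2.1]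
      right_inv b := Subtype.ext <| show (b.1 ^ v') ^ v = b.1 by
        rw [← pow_mul, mul_comm, hinv b.2.1] }

theorem prime_pow_dvd_card_pow_eq_of_mem_center [Finite G] {g : G} (hg : g ∈ center G)
    {n k : ℕ} (hn : n ≠ 0) (hkn : p ^ k ∣ n) (hkG : p ^ k ∣ Nat.card G) :
    p ^ k ∣ Nat.card {x // x ^ n = g} := by
  cases nonempty_fintype G
  have hconj (w x : G) : (w * x * w⁻¹) ^ n = g ↔ x ^ n = g := by
    have hgw : MulAut.conj w g = g := by
      rw [MulAut.conj_apply, mem_center_iff.1 hg w, mul_inv_cancel_right]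
    rw [← MulAut.conj_apply, ← map_pow]
    nth_rewrite 1 [← hgw]
    exact (MulAut.conj w).injective.eq_iff
  rw [card_eq_sum_card_commute_isPElement (p := p) (· ^ n = g)]
  refine dvd_sum_of_dvd_index_centralizer_mul _
    (card_commute_isPElement_conj (fun x => x ^ n = g) hconj) fun z => ?_
  refine prime_pow_dvd_index_mul _ hkG ?_
  by_cases hz : (orderOf z).Coprime p
  swap
  · simp [hz]
  set H := centralizer {z}
  have hgH : g ∈ H := center_le_centralizer {z} hg
  have hzH : z ^ n ∈ H := pow_mem (mem_centralizer_singleton_iff.2 rfl) n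
  set h : H := ⟨g * (z ^ n)⁻¹, mul_mem hgH (inv_mem hzH)⟩
  have hfiber : Nat.card
      {a // Commute a z ∧ IsPElement p a ∧ (orderOf z).Coprime p ∧ (a * z) ^ n = g} =
      Nat.card {a : H // IsPElement p a ∧ a ^ n = h} := by
    rw [card_commute_eq_card_centralizer]
    refine Nat.card_congr (Equiv.subtypeEquivRight fun a => ?_)
    have hcomm : Commute (a : G) z := mem_centralizer_singleton_iff.1 a.2
    rw [isPElement_coe, eq_true hz, true_and, Subtype.ext_iff, Subgroup.coe_pow, hcomm.mul_pow,
      eq_mul_inv_iff_mul_eq]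
  rw [hfiber, ← Nat.ordProj_mul_ordCompl_eq_self n p,
    card_isPElement_pow_mul_eq (Nat.coprime_ordCompl hp.out hn).symm]
  have hkc : k ≤ n.factorization p := (hp.out.pow_dvd_iff_le_factorization hn).1 hkn
  exact (pow_dvd_pow p (min_le_min_right _ hkc)).trans
    (prime_pow_dvd_card_isPElement_pow_eq _ _)

end Frobenius

open Frobenius in
theorem frobenius_1903 (G : Type*) [Group G] [Fintype G] (g : G) (n : ℕ) (hn : 0 < n) :
    Nat.gcd n (Nat.card (Subgroup.centralizer ({g} : Set G))) ∣
      Nat.card {x : G // x ^ n = g} := by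
  rw [card_pow_eq_eq_card_centralizer]
  refine (Nat.dvd_iff_prime_pow_dvd_dvd _ _).2 fun p k hp hpk => ?_
  have : Fact p.Prime := ⟨hp⟩
  exact prime_pow_dvd_card_pow_eq_of_mem_center (mem_center_centralizer_self g) hn.ne'
    (hpk.trans (Nat.gcd_dvd_left _ _)) (hpk.trans (Nat.gcd_dvd_right _ _))
end

section
/- Let G be a finite group and n a positive integer. Then the number of pairs (x, y) ∈ G × G with x^n y^n = 1 and x y x⁻¹ y⁻¹ arbitrary, namely solutions of the single equation x^n y^n = 1, is divisible by |G|. -/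
/-!
Putting `u = (x * y)⁻¹` turns `x ^ n * y ^ n = 1` into `(u * x) ^ n = x ^ n`, and
`(u * x) ^ n * x⁻¹ ^ n` is the product of the conjugates `x ^ i * u * x⁻¹ ^ i`, `i < n`.
So the solutions correspond to the pairs `(x, v)` where `v` is an `n`-tuple with product one
which conjugation by `x` rotates by one place. For any equivariant self-map `σ` of a finite
`G`-set, the pairs `(g, v)` with `g • v = σ v` lying over one orbit number either `0` or
`|orbit| * |stabilizer| = |G|`, because each fibre `{g | g • v = σ v}` is empty or a coset of
the stabilizer of `v`.
-/

open MulAction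

section Counting

variable {G X : Type*} [Group G] [MulAction G X]

lemma card_smul_eq_of_mem_orbit {x y : X} (h : y ∈ orbit G x) :
    Nat.card {g : G // g • x = y} = Nat.card (stabilizer G x) := by
  obtain ⟨g₀, rfl⟩ := h
  refine Nat.card_congr ((Equiv.mulLeft g₀⁻¹).subtypeEquiv fun g => ?_)
  simp [mul_smul, inv_smul_eq_iff]

lemma card_smul_eq_of_notMem_orbit {x y : X} (h : y ∉ orbit G x) :
    Nat.card {g : G // g • x = y} = 0 :=
  have : IsEmpty {g : G // g • x = y} := ⟨fun g => h ⟨g.1, g.2⟩⟩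
  Nat.card_of_isEmpty

variable (σ : X →[G] X)

lemma card_smul_eq_map_smul (h : G) (x : X) :
    Nat.card {g : G // g • h • x = σ (h • x)} = Nat.card {g : G // g • x = σ x} := by
  refine Nat.card_congr ((MulAut.conj h).toEquiv.symm.subtypeEquiv fun g => ?_)
  simp [map_smul, mul_smul, ← inv_smul_eq_iff]

lemma card_dvd_card_orbit_mul_card_smul_eq_map [Finite G] (x : X) :
    Nat.card G ∣ Nat.card (orbit G x) * Nat.card {g : G // g • x = σ x} := by
  by_cases h : σ x ∈ orbit G x
  · rw [card_smul_eq_of_mem_orbit h, Nat.card_congr (orbitEquivQuotientStabilizer G x),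
      ← Subgroup.index, Subgroup.index_mul_card]
  · simp [card_smul_eq_of_notMem_orbit h]

theorem card_dvd_card_smul_eq_map [Finite G] [Finite X] :
    Nat.card G ∣ Nat.card {p : G × X // p.1 • p.2 = σ p.2} := by
  classical
  have := Fintype.ofFinite X
  let e : {p : G × X // p.1 • p.2 = σ p.2} ≃ Σ x : X, {g : G // g • x = σ x} :=
    { toFun p := ⟨p.1.2, p.1.1, p.2⟩
      invFun s := ⟨(s.2.1, s.1), s.2.2⟩
      left_inv _ := rfl
      right_inv _ := rfl }
  rw [Nat.card_congr e, Nat.card_sigma, Fintype.sum_equiv (selfEquivSigmaOrbits G X)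
    (fun x => Nat.card {g : G // g • x = σ x})
    (fun p => Nat.card {g : G // g • (p.2 : X) = σ p.2}) fun _ => rfl, Fintype.sum_sigma]
  refine Finset.dvd_sum fun ω _ => ?_
  have hconst : ∀ x : orbit G ω.out, Nat.card {g : G // g • (x : X) = σ x} =
      Nat.card {g : G // g • ω.out = σ ω.out} := by
    rintro ⟨_, h, rfl⟩
    exact card_smul_eq_map_smul σ h ω.out
  rw [Finset.sum_congr rfl fun x _ => hconst x, Finset.sum_const, Finset.card_univ,
    ← Nat.card_eq_fintype_card, smul_eq_mul]
  exact card_dvd_card_orbit_mul_card_smul_eq_map σ ω.out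

end Counting

section OrbitTuples

variable {M α : Type*} [Monoid M] [MulAction M α] {n : ℕ}

lemma eq_pow_smul_of_smul_eq_rotate {g : M} {f : Fin (n + 1) → α}
    (h : g • f = fun i => f (i + 1)) : f = fun i : Fin (n + 1) => g ^ (i : ℕ) • f 0 := by
  funext i
  induction i using Fin.induction with
  | zero => simp
  | succ i ih =>
    rw [← Fin.coeSucc_eq_succ, ← congrFun h, Pi.smul_apply, ih]
    simp [pow_succ', mul_smul]

lemma smul_pow_smul_eq_rotate {g : M} {a : α} (h : g ^ (n + 1) • a = a) :
    (g • fun i : Fin (n + 1) => g ^ (i : ℕ) • a) =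
      fun i => g ^ ((i + 1 : Fin (n + 1)) : ℕ) • a := by
  funext i
  induction i using Fin.lastCases with
  | last => simpa [← mul_smul, ← pow_succ'] using h
  | cast i => simp [Fin.coeSucc_eq_succ, ← mul_smul, ← pow_succ']

end OrbitTuples

section ConjTuples

open ConjAct

variable {G : Type*} [Group G]

lemma ConjAct.prod_ofFn_pow_smul (g : ConjAct G) (u : G) (k : ℕ) :
    (List.ofFn fun i : Fin k => g ^ (i : ℕ) • u).prod =
      (u * ofConjAct g) ^ k * (ofConjAct g ^ k)⁻¹ := by
  induction k with
  | zero => simp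
  | succ k ih =>
    rw [List.ofFn_succ', List.prod_concat]
    simp only [Fin.val_castSucc, Fin.val_last]
    rw [ih, smul_def, map_pow, pow_succ (u * _), pow_succ (ofConjAct g), mul_inv_rev]
    group

lemma commute_pow_of_mul_pow_eq {n : ℕ} {x u : G} (h : (u * x) ^ n = x ^ n) :
    Commute (x ^ n) u := by
  have hux : Commute (x ^ n) (u * x) := h ▸ Commute.pow_self (u * x) n
  simpa using hux.mul_right (Commute.pow_self x n).inv_right

variable (G) in
def tuplesProdEqOne (n : ℕ) : SubMulAction (ConjAct G) (Fin n → G) where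
  carrier := {v | (List.ofFn v).prod = 1}
  smul_mem' g v hv := by
    change (List.ofFn ((g • ·) ∘ v)).prod = 1
    rw [← List.map_ofFn, ← List.smul_prod', hv, smul_one]

@[simp]
lemma mem_tuplesProdEqOne {n : ℕ} {v : Fin n → G} :
    v ∈ tuplesProdEqOne G n ↔ (List.ofFn v).prod = 1 := Iff.rfl

namespace tuplesProdEqOne

def rotate (n : ℕ) : tuplesProdEqOne G (n + 1) →[ConjAct G] tuplesProdEqOne G (n + 1) where
  toFun v := ⟨fun i => v.1 (i + 1), by
    have hv := v.2
    rw [mem_tuplesProdEqOne, List.ofFn_succ, List.prod_cons] at hv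
    rw [mem_tuplesProdEqOne, List.ofFn_succ', List.prod_concat]
    simpa only [Fin.coeSucc_eq_succ, Fin.last_add_one] using mul_eq_one_comm.mp hv⟩
  map_smul' _ _ := rfl

def mulPowEqPowEquiv (n : ℕ) :
    {p : G × G // (p.2 * p.1) ^ (n + 1) = p.1 ^ (n + 1)} ≃
      {q : ConjAct G × tuplesProdEqOne G (n + 1) // q.1 • q.2 = rotate n q.2} where
  toFun p := ⟨(toConjAct p.1.1, ⟨fun i => toConjAct p.1.1 ^ (i : ℕ) • p.1.2, by
      rw [mem_tuplesProdEqOne, prod_ofFn_pow_smul, ofConjAct_toConjAct, p.2,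
        mul_inv_cancel]⟩), by
    refine Subtype.ext (smul_pow_smul_eq_rotate ?_)
    rw [smul_def, map_pow, ofConjAct_toConjAct, (commute_pow_of_mul_pow_eq p.2).eq,
      mul_inv_cancel_right]⟩
  invFun q := ⟨(ofConjAct q.1.1, q.1.2.1 0), by
    have hv := eq_pow_smul_of_smul_eq_rotate (congrArg Subtype.val q.2)
    have hprod := q.1.2.2
    rw [mem_tuplesProdEqOne, hv, prod_ofFn_pow_smul, mul_inv_eq_one] at hprod
    exact hprod⟩
  left_inv p := by simp
  right_inv q := by
    ext1
    refine Prod.ext (toConjAct_ofConjAct _) (Subtype.ext ?_)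
    exact (eq_pow_smul_of_smul_eq_rotate (congrArg Subtype.val q.2)).symm

end tuplesProdEqOne

def powMulPowEqOneEquiv (n : ℕ) :
    {p : G × G // p.1 ^ n * p.2 ^ n = 1} ≃ {p : G × G // (p.2 * p.1) ^ n = p.1 ^ n} where
  toFun p := ⟨(p.1.1, (p.1.1 * p.1.2)⁻¹), by
    rw [mul_inv_rev, inv_mul_cancel_right, inv_pow, inv_eq_of_mul_eq_one_left p.2]⟩
  invFun p := ⟨(p.1.1, (p.1.2 * p.1.1)⁻¹), by rw [inv_pow, p.2, mul_inv_cancel]⟩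
  left_inv p := by simp
  right_inv p := by simp

end ConjTuples

theorem solomon_power_pairs (G : Type*) [Group G] [Fintype G] (n : ℕ) (hn : 0 < n) :
    Fintype.card G ∣ Nat.card {p : G × G // p.1 ^ n * p.2 ^ n = 1} := by
  obtain ⟨m, rfl⟩ := Nat.exists_eq_add_one_of_ne_zero hn.ne'
  rw [Fintype.card_eq_nat_card, Nat.card_congr
    ((powMulPowEqOneEquiv (m + 1)).trans (tuplesProdEqOne.mulPowEqPowEquiv m))]
  exact card_dvd_card_smul_eq_map (G := ConjAct G) (tuplesProdEqOne.rotate m)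
end

section
/- Let F be a group with an epimorphism deg : F → ℤ/nℤ, let G be a group, φ : F → G a homomorphism, f₁ ∈ F with deg f₁ = 1, and g ∈ G. There exists a homomorphism ψ : F → G with ψ(f) = φ(f) for all f ∈ ker(deg) and ψ(f₁) = φ(f₁)·g if and only if g commutes with every element of φ(ker deg) and (φ(f₁)g)^n = (φ(f₁))^n. -/
/-!
With `K = ker deg` and `t = f₁`, the group `F` is a quotient of `K ⋊ ℤ`, where `ℤ` acts on `K`
by conjugation with powers of `t`, via `(h, k) ↦ h * t ^ k`. A homomorphism on `K ⋊ ℤ` is a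
homomorphism on `K` together with an element `c` whose conjugation action is compatible with that
of `t`; it descends to `F` iff it kills the pairs `(t ^ (-k), k)` with `t ^ k ∈ K`, i.e. iff
`c ^ k = φ t ^ k` for all such `k`, which are the multiples of `n`. For `c = φ f₁ * g`,
compatibility says exactly that `g` centralizes `φ K`.
-/

open Multiplicative

namespace Subgroup

variable {F G : Type*} [Group F] [Group G] (K : Subgroup F) [K.Normal] (t : F)

def conjZPowers : Multiplicative ℤ →* MulAut K :=
  K.normalizerMonoidHom.comp (zpowersHom _ ⟨t, K.normalizer_eq_top ▸ mem_top t⟩)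

theorem coe_conjZPowers_apply (k : Multiplicative ℤ) (x : K) :
    (K.conjZPowers t k x : F) = MulAut.conj (t ^ k.toAdd) x := by
  rw [conjZPowers, MonoidHom.comp_apply, zpowersHom_apply]
  rfl

def mulZPowers : K ⋊[K.conjZPowers t] Multiplicative ℤ →* F :=
  SemidirectProduct.lift K.subtype (zpowersHom F t) fun _ ↦ by ext; simp [coe_conjZPowers_apply]

theorem mulZPowers_apply (x : K ⋊[K.conjZPowers t] Multiplicative ℤ) :
    K.mulZPowers t x = x.left * t ^ x.right.toAdd := rfl

theorem mulZPowers_surjective (hK : ∀ f, ∃ k : ℤ, f * t ^ (-k) ∈ K) :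
    Function.Surjective (K.mulZPowers t) := fun f ↦ by
  obtain ⟨k, hk⟩ := hK f
  exact ⟨⟨⟨_, hk⟩, ofAdd k⟩, by simp [mulZPowers_apply]⟩

variable {K t} {φ : F →* G} {c : G}

theorem conj_apply_mem (s : F) {h : F} (hh : h ∈ K) : MulAut.conj s h ∈ K :=
  Normal.conj_mem ‹_› h hh s

theorem map_conj_zpow (hc : ∀ h ∈ K, φ (MulAut.conj t h) = MulAut.conj c (φ h)) (k : ℤ) :
    ∀ h ∈ K, φ (MulAut.conj (t ^ k) h) = MulAut.conj (c ^ k) (φ h) := by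
  induction k using Int.induction_on with
  | zero => simp
  | succ k ih =>
    intro h hh
    rw [zpow_add_one, zpow_add_one, map_mul, map_mul, MulAut.mul_apply, MulAut.mul_apply,
      ih _ (conj_apply_mem t hh), hc h hh]
  | pred k ih =>
    intro h hh
    have hinv : φ (MulAut.conj t⁻¹ h) = MulAut.conj c⁻¹ (φ h) := by
      apply (MulAut.conj c).injective
      rw [← hc _ (conj_apply_mem t⁻¹ hh)]
      simp [mul_assoc]
    rw [zpow_sub_one, zpow_sub_one, map_mul, map_mul, MulAut.mul_apply, MulAut.mul_apply,
      ih _ (conj_apply_mem t⁻¹ hh), hinv]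

variable (K t φ c) (hc : ∀ h ∈ K, φ (MulAut.conj t h) = MulAut.conj c (φ h))

def liftZPowers : K ⋊[K.conjZPowers t] Multiplicative ℤ →* G :=
  SemidirectProduct.lift (φ.comp K.subtype) (zpowersHom G c) fun k ↦ by
    ext h
    simpa [coe_conjZPowers_apply] using map_conj_zpow hc k.toAdd h h.2

theorem liftZPowers_apply (x : K ⋊[K.conjZPowers t] Multiplicative ℤ) :
    K.liftZPowers t φ c hc x = φ x.left * c ^ x.right.toAdd := rfl

theorem ker_mulZPowers_le (hpow : ∀ k : ℤ, t ^ k ∈ K → c ^ k = φ t ^ k) :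
    (K.mulZPowers t).ker ≤ (K.liftZPowers t φ c hc).ker := by
  intro x hx
  have hleft : (x.left : F) = t ^ (-x.right.toAdd) := by
    rw [MonoidHom.mem_ker, mulZPowers_apply, mul_eq_one_iff_eq_inv] at hx
    rw [hx, zpow_neg]
  have hmem : t ^ x.right.toAdd ∈ K := by
    rw [← inv_mem_iff, ← zpow_neg, ← hleft]
    exact x.left.2
  rw [MonoidHom.mem_ker, liftZPowers_apply, hleft, map_zpow, hpow _ hmem, zpow_neg,
    inv_mul_cancel]

theorem exists_extension_iff (hK : ∀ f, ∃ k : ℤ, f * t ^ (-k) ∈ K) :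
    (∃ ψ : F →* G, (∀ h ∈ K, ψ h = φ h) ∧ ψ t = c) ↔
      (∀ h ∈ K, φ (MulAut.conj t h) = MulAut.conj c (φ h)) ∧
        ∀ k : ℤ, t ^ k ∈ K → c ^ k = φ t ^ k := by
  constructor
  · rintro ⟨ψ, hψK, rfl⟩
    refine ⟨fun h hh ↦ ?_, fun k hk ↦ ?_⟩
    · rw [← hψK _ (conj_apply_mem t hh), ← hψK h hh]
      simp
    · rw [← map_zpow, ← map_zpow, hψK _ hk]
  · rintro ⟨hc, hpow⟩
    obtain ⟨ψ, hψ⟩ : ∃ ψ : F →* G, ψ.comp (K.mulZPowers t) = K.liftZPowers t φ c hc :=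
      ⟨_, (K.mulZPowers t).liftOfRightInverse_comp _
        (Function.rightInverse_surjInv (K.mulZPowers_surjective t hK))
        ⟨K.liftZPowers t φ c hc, K.ker_mulZPowers_le t φ c hc hpow⟩⟩
    refine ⟨ψ, fun h hh ↦ ?_, ?_⟩
    · simpa [mulZPowers_apply, liftZPowers_apply] using
        DFunLike.congr_fun hψ (SemidirectProduct.inl ⟨h, hh⟩)
    · simpa [mulZPowers_apply, liftZPowers_apply] using
        DFunLike.congr_fun hψ (SemidirectProduct.inr (ofAdd 1))

end Subgroup

theorem MulAut.conj_mul_apply_eq_iff_commute {G : Type*} [Group G] (a g x : G) :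
    MulAut.conj (a * g) x = MulAut.conj a x ↔ Commute g x := by
  rw [map_mul, MulAut.mul_apply, (MulAut.conj a).apply_eq_iff_eq, MulAut.conj_apply,
    mul_inv_eq_iff_eq_mul]
  rfl

theorem forall_dvd_zpow_eq_zpow_iff {G : Type*} [Group G] (a b : G) (n : ℕ) :
    (∀ k : ℤ, (n : ℤ) ∣ k → a ^ k = b ^ k) ↔ a ^ n = b ^ n := by
  refine ⟨fun h ↦ mod_cast h n dvd_rfl, ?_⟩
  rintro h _ ⟨m, rfl⟩
  rw [zpow_mul, zpow_mul, zpow_natCast, zpow_natCast, h]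

section Degree

variable {F : Type*} [Group F] {n : ℕ} {deg : F →* Multiplicative (ZMod n)} {t : F}

theorem map_zpow_of_eq_ofAdd_one (ht : deg t = ofAdd 1) (k : ℤ) :
    deg (t ^ k) = ofAdd (k : ZMod n) := by
  rw [map_zpow, ht, ← ofAdd_zsmul, zsmul_one]

theorem zpow_mem_ker_iff_dvd (ht : deg t = ofAdd 1) (k : ℤ) :
    t ^ k ∈ deg.ker ↔ (n : ℤ) ∣ k := by
  rw [MonoidHom.mem_ker, map_zpow_of_eq_ofAdd_one ht, ← ofAdd_zero, ofAdd.injective.eq_iff,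
    ZMod.intCast_zmod_eq_zero_iff_dvd]

theorem exists_mul_zpow_neg_mem_ker (ht : deg t = ofAdd 1) (f : F) :
    ∃ k : ℤ, f * t ^ (-k) ∈ deg.ker := by
  obtain ⟨k, hk⟩ := ZMod.intCast_surjective (deg f).toAdd
  refine ⟨k, ?_⟩
  rw [MonoidHom.mem_ker, map_mul, map_zpow_of_eq_ofAdd_one ht, Int.cast_neg, hk, ofAdd_neg,
    ofAdd_toAdd, mul_inv_cancel]

end Degree

theorem extension_lemma_general (F G : Type*) [Group F] [Group G] (n : ℕ)
    (deg : F →* Multiplicative (ZMod n))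
    (φ : F →* G) (f₁ : F) (hf₁ : deg f₁ = Multiplicative.ofAdd (1 : ZMod n)) (g : G) :
    (∃ ψ : F →* G, (∀ f ∈ deg.ker, ψ f = φ f) ∧ ψ f₁ = φ f₁ * g) ↔
      ((∀ f ∈ deg.ker, Commute g (φ f)) ∧ (φ f₁ * g) ^ n = (φ f₁) ^ n) := by
  rw [deg.ker.exists_extension_iff f₁ φ (φ f₁ * g) (exists_mul_zpow_neg_mem_ker hf₁)]
  refine and_congr (forall₂_congr fun f _ ↦ ?_) ?_
  · rw [show φ (MulAut.conj f₁ f) = MulAut.conj (φ f₁) (φ f) by simp, eq_comm,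
      MulAut.conj_mul_apply_eq_iff_commute]
  · simp_rw [zpow_mem_ker_iff_dvd hf₁]
    exact forall_dvd_zpow_eq_zpow_iff _ _ n

theorem extension_lemma (F G : Type*) [Group F] [Group G] (n : ℕ)
    (deg : F →* Multiplicative (ZMod n)) (hdeg : Function.Surjective deg)
    (φ : F →* G) (f₁ : F) (hf₁ : deg f₁ = Multiplicative.ofAdd (1 : ZMod n)) (g : G) :
    (∃ ψ : F →* G, (∀ f ∈ deg.ker, ψ f = φ f) ∧ ψ f₁ = φ f₁ * g) ↔
      ((∀ f ∈ deg.ker, Commute g (φ f)) ∧ (φ f₁ * g) ^ n = (φ f₁) ^ n) :=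
  extension_lemma_general F G n deg φ f₁ hf₁ g
end

section
/- Let F be a group, G a finite group, H ≤ G, and deg : F → ℤ a surjective homomorphism. Suppose Φ is a set of homomorphisms F → G such that: (I) for every h ∈ H and φ ∈ Φ, the map f ↦ h⁻¹ φ(f) h is in Φ; and (II) for every φ ∈ Φ and every h in the φ-core H_φ = (⋂_{f ∈ F} φ(f)⁻¹ H φ(f)) ∩ C_G(φ(ker deg)), and every f₁ ∈ F with deg f₁ = 1, the homomorphism ψ with ψ = φ on ker(deg) and ψ(f₁) = φ(f₁)h lies in Φ. Then the cardinality of Φ is divisible by |H|. -/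
/-- The φ-core of `H`: elements `h` with `φ f * h * (φ f)⁻¹ ∈ H` for all `f`
(i.e. `h ∈ H ^ φ(f) = φ(f)⁻¹ H φ(f)` for all `f`) which moreover commute with
`φ(ker deg)`. -/
def phiCore {F G : Type*} [Group F] [Group G] (H : Subgroup G)
    (deg : F →* Multiplicative ℤ) (φ : F →* G) : Set G :=
  {h : G | (∀ f : F, φ f * h * (φ f)⁻¹ ∈ H) ∧ ∀ f ∈ deg.ker, Commute h (φ f)}

/-!
Call `ψ` a twist of `φ` if it agrees with `φ` on `ker deg` and `φ(f)⁻¹ψ(f)` lies in the φ-core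
`K_φ` for every `f`. Twisting is an equivalence relation that preserves the core, and since
`F = ker deg ⋊ ⟨f₁⟩`, the twists of `φ` correspond to `K_φ` via `ψ ↦ φ(f₁)⁻¹ψ(f₁)`. For `h ∈ H`,
the conjugate `h φ h⁻¹` is a twist of `φ` exactly when `h ∈ K_φ`. Hence the homomorphisms that
`H` conjugates to twists of `φ` number `[H : K_φ] · |K_φ| = |H|`, and by (I) and (II) `Φ` is a
union of such classes.
-/

theorem Setoid.dvd_natCard_of_natCard_class_eq {α : Type*} (s : Setoid α) {n : ℕ}
    (hs : ∀ a, Nat.card {b // s b a} = n) {S : Set α} (hS : ∀ a ∈ S, ∀ b, s b a → b ∈ S) :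
    n ∣ Nat.card S := by
  rcases finite_or_infinite S with hfin | hinf
  · let t : Setoid S := s.comap Subtype.val
    have : Fintype (Quotient t) := Fintype.ofFinite _
    have hfiber (q : Quotient t) : Nat.card {a : S // Quotient.mk t a = q} = n := by
      induction q using Quotient.ind with
      | _ a =>
        rw [← hs a]
        exact Nat.card_congr ((Equiv.subtypeEquivRight fun b => Quotient.eq).trans
          (Equiv.subtypeSubtypeEquivSubtype (hS a a.2 _)))
    rw [← Nat.card_congr (Equiv.sigmaFiberEquiv (Quotient.mk t)), Nat.card_sigma]
    exact Finset.dvd_sum fun q _ => (hfiber q).symm ▸ dvd_rfl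
  · simp [Nat.card_eq_zero_of_infinite]

section DegreeOne

variable {F G : Type*} [Group F] [Group G] {deg : F →* Multiplicative ℤ} {f₁ : F}

theorem mul_zpow_neg_mem_ker (hf₁ : deg f₁ = Multiplicative.ofAdd 1) (f : F) :
    f * f₁ ^ (-Multiplicative.toAdd (deg f)) ∈ deg.ker := by
  simp [MonoidHom.mem_ker, hf₁, ← ofAdd_zsmul]

theorem Subgroup.eq_top_of_ker_le_of_mem (hf₁ : deg f₁ = Multiplicative.ofAdd 1)
    {S : Subgroup F} (hker : deg.ker ≤ S) (h₁ : f₁ ∈ S) : S = ⊤ := by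
  refine eq_top_iff.mpr fun f _ => ?_
  simpa using
    S.mul_mem (hker (mul_zpow_neg_mem_ker hf₁ f)) (S.zpow_mem h₁ (Multiplicative.toAdd (deg f)))

theorem MonoidHom.ext_of_eqOn_ker (hf₁ : deg f₁ = Multiplicative.ofAdd 1) {ψ ψ' : F →* G}
    (hker : ∀ k ∈ deg.ker, ψ k = ψ' k) (h₁ : ψ f₁ = ψ' f₁) : ψ = ψ' := by
  have := Subgroup.eq_top_of_ker_le_of_mem hf₁ (S := ψ.eqLocus ψ') hker h₁
  ext f
  exact (this ▸ Subgroup.mem_top f : f ∈ ψ.eqLocus ψ')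

theorem inv_mul_mem_of_mem_ker_of_mem (hf₁ : deg f₁ = Multiplicative.ofAdd 1)
    {φ ψ : F →* G} {K : Subgroup G} (hK : φ.range ≤ Subgroup.normalizer K)
    (hker : ∀ k ∈ deg.ker, (φ k)⁻¹ * ψ k ∈ K) (h₁ : (φ f₁)⁻¹ * ψ f₁ ∈ K) (f : F) :
    (φ f)⁻¹ * ψ f ∈ K := by
  have hconj (f : F) {x : G} (hx : x ∈ K) : (φ f)⁻¹ * x * φ f ∈ K :=
    (Subgroup.mem_normalizer_iff''.mp (hK ⟨f, rfl⟩) x).mp hx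
  let S : Subgroup F :=
    { carrier := {f | (φ f)⁻¹ * ψ f ∈ K}
      one_mem' := by simp
      mul_mem' := fun {a b} ha hb => by
        simpa [mul_assoc] using K.mul_mem (hconj b ha) hb
      inv_mem' := fun {a} ha => by
        simpa [mul_assoc] using hconj a⁻¹ (K.inv_mem ha) }
  have hS : S = ⊤ := Subgroup.eq_top_of_ker_le_of_mem hf₁ hker h₁
  exact (hS ▸ Subgroup.mem_top f : f ∈ S)

theorem conj_zpow_eq_of_conj_eq {N : Subgroup F} [N.Normal] {φ : F →* G} {a : G}
    (ha : ∀ k ∈ N, a * φ k * a⁻¹ = φ (f₁ * k * f₁⁻¹)) (n : ℤ) :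
    ∀ k ∈ N, a ^ n * φ k * (a ^ n)⁻¹ = φ (f₁ ^ n * k * (f₁ ^ n)⁻¹) := by
  have ha_inv (k : F) (hk : k ∈ N) : a⁻¹ * φ k * a = φ (f₁⁻¹ * k * f₁) := by
    calc a⁻¹ * φ k * a = a⁻¹ * (a * φ (f₁⁻¹ * k * f₁) * a⁻¹) * a := by
          rw [ha _ (Subgroup.Normal.conj_mem' ‹_› k hk f₁)]; congr 3; group
      _ = φ (f₁⁻¹ * k * f₁) := by group
  induction n using Int.induction_on with
  | zero => simp
  | succ n ih =>
    intro k hk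
    calc a ^ ((n : ℤ) + 1) * φ k * (a ^ ((n : ℤ) + 1))⁻¹
        = a * (a ^ (n : ℤ) * φ k * (a ^ (n : ℤ))⁻¹) * a⁻¹ := by group
      _ = φ (f₁ * (f₁ ^ (n : ℤ) * k * (f₁ ^ (n : ℤ))⁻¹) * f₁⁻¹) := by
        rw [ih k hk, ha _ (Subgroup.Normal.conj_mem ‹_› k hk _)]
      _ = _ := by congr 1; group
  | pred n ih =>
    intro k hk
    calc a ^ (-(n : ℤ) - 1) * φ k * (a ^ (-(n : ℤ) - 1))⁻¹
        = a⁻¹ * (a ^ (-(n : ℤ)) * φ k * (a ^ (-(n : ℤ)))⁻¹) * a := by group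
      _ = φ (f₁⁻¹ * (f₁ ^ (-(n : ℤ)) * k * (f₁ ^ (-(n : ℤ)))⁻¹) * f₁) := by
        rw [ih k hk, ha_inv _ (Subgroup.Normal.conj_mem ‹_› k hk _)]
      _ = _ := by congr 1; group

theorem exists_monoidHom_eqOn_ker_of_conj_eq (hf₁ : deg f₁ = Multiplicative.ofAdd 1)
    (φ : F →* G) {a : G} (ha : ∀ k ∈ deg.ker, a * φ k * a⁻¹ = φ (f₁ * k * f₁⁻¹)) :
    ∃ ψ : F →* G, (∀ k ∈ deg.ker, ψ k = φ k) ∧ ψ f₁ = a := by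
  let n (f : F) : ℤ := Multiplicative.toAdd (deg f)
  have hn_mul (f g : F) : n (f * g) = n f + n g := by simp [n]
  refine ⟨MonoidHom.mk' (fun f => φ (f * f₁ ^ (-n f)) * a ^ n f) fun f g => ?_,
    fun k hk => ?_, ?_⟩
  · have hconj := conj_zpow_eq_of_conj_eq ha (n f) _ (mul_zpow_neg_mem_ker hf₁ g)
    calc φ (f * g * f₁ ^ (-n (f * g))) * a ^ n (f * g)
        = φ (f * f₁ ^ (-n f) * (f₁ ^ n f * (g * f₁ ^ (-n g)) * (f₁ ^ n f)⁻¹)) *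
            a ^ (n f + n g) := by
          rw [hn_mul]; congr 2; group
      _ = φ (f * f₁ ^ (-n f)) * (a ^ n f * φ (g * f₁ ^ (-n g)) * (a ^ n f)⁻¹) *
            a ^ (n f + n g) := by rw [hconj, map_mul]
      _ = φ (f * f₁ ^ (-n f)) * a ^ n f * (φ (g * f₁ ^ (-n g)) * a ^ n g) := by group
  · simp [n, (MonoidHom.mem_ker).mp hk]
  · simp [n, hf₁]

end DegreeOne

section conjComp

variable {F G : Type*} [Group F] [Group G]

def conjComp (g : G) (φ : F →* G) : F →* G :=
  (MulAut.conj g).toMonoidHom.comp φ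

@[simp]
theorem conjComp_apply (g : G) (φ : F →* G) (f : F) : conjComp g φ f = g * φ f * g⁻¹ := rfl

@[simp]
theorem conjComp_one (φ : F →* G) : conjComp 1 φ = φ := by ext; simp

theorem conjComp_conjComp (g h : G) (φ : F →* G) :
    conjComp g (conjComp h φ) = conjComp (g * h) φ := by
  ext; simp [mul_assoc]

end conjComp

namespace PhiCore

variable {F G : Type*} [Group F] [Group G] (H : Subgroup G) (deg : F →* Multiplicative ℤ)

def subgroup (φ : F →* G) : Subgroup G where
  carrier := phiCore H deg φ
  one_mem' := ⟨fun f => by simp, fun _ _ => Commute.one_left _⟩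
  mul_mem' := by
    rintro a b ⟨ha, ha'⟩ ⟨hb, hb'⟩
    exact ⟨fun f => by simpa [mul_assoc] using H.mul_mem (ha f) (hb f),
      fun k hk => (ha' k hk).mul_left (hb' k hk)⟩
  inv_mem' := by
    rintro a ⟨ha, ha'⟩
    exact ⟨fun f => by simpa [mul_assoc] using H.inv_mem (ha f), fun k hk => (ha' k hk).inv_left⟩

def IsTwist (ψ φ : F →* G) : Prop :=
  (∀ k ∈ deg.ker, ψ k = φ k) ∧ ∀ f, (φ f)⁻¹ * ψ f ∈ subgroup H deg φ

variable {H deg} {φ ψ χ : F →* G} {g x : G}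

theorem subgroup_le : subgroup H deg φ ≤ H := fun x hx => by simpa using hx.1 1

theorem conj_mem_subgroup (hx : x ∈ subgroup H deg φ) (f : F) :
    φ f * x * (φ f)⁻¹ ∈ subgroup H deg φ := by
  refine ⟨fun f' => by simpa [mul_assoc] using hx.1 (f' * f), fun k hk => ?_⟩
  have := (hx.2 _ (deg.normal_ker.conj_mem' k hk f)).map (MulAut.conj (φ f))
  simpa [mul_assoc] using this

theorem range_le_normalizer_subgroup : φ.range ≤ Subgroup.normalizer (subgroup H deg φ) := by
  rintro _ ⟨f, rfl⟩
  refine Subgroup.mem_normalizer_iff.mpr fun x => ⟨fun hx => conj_mem_subgroup hx f, fun hx => ?_⟩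
  simpa [mul_assoc] using conj_mem_subgroup hx f⁻¹

theorem conj_mem_subgroup_conjComp (hg : g ∈ H) (hx : x ∈ subgroup H deg φ) :
    g * x * g⁻¹ ∈ subgroup H deg (conjComp g φ) := by
  refine ⟨fun f => ?_, fun k hk => by simpa using (hx.2 k hk).map (MulAut.conj g)⟩
  have := H.mul_mem (H.mul_mem hg (hx.1 f)) (H.inv_mem hg)
  simpa [mul_assoc] using this

namespace IsTwist

theorem refl (φ : F →* G) : IsTwist H deg φ φ :=
  ⟨fun _ _ => rfl, fun f => by simp⟩

theorem subgroup_le (h : IsTwist H deg ψ φ) : subgroup H deg φ ≤ subgroup H deg ψ := by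
  intro x hx
  refine ⟨fun f => ?_, fun k hk => h.1 k hk ▸ hx.2 k hk⟩
  set κ := (φ f)⁻¹ * ψ f
  have hκ : κ * x * κ⁻¹ ∈ subgroup H deg φ :=
    (subgroup H deg φ).mul_mem ((subgroup H deg φ).mul_mem (h.2 f) hx)
      ((subgroup H deg φ).inv_mem (h.2 f))
  simpa [κ, mul_assoc] using hκ.1 f

theorem symm (h : IsTwist H deg ψ φ) : IsTwist H deg φ ψ :=
  ⟨fun k hk => (h.1 k hk).symm,
    fun f => h.subgroup_le (by simpa using (subgroup H deg φ).inv_mem (h.2 f))⟩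

theorem subgroup_eq (h : IsTwist H deg ψ φ) : subgroup H deg ψ = subgroup H deg φ :=
  le_antisymm h.symm.subgroup_le h.subgroup_le

theorem trans (h₁ : IsTwist H deg χ ψ) (h₂ : IsTwist H deg ψ φ) : IsTwist H deg χ φ := by
  refine ⟨fun k hk => (h₁.1 k hk).trans (h₂.1 k hk), fun f => ?_⟩
  have := (subgroup H deg φ).mul_mem (h₂.2 f) (h₂.subgroup_eq ▸ h₁.2 f)
  simpa [mul_assoc] using this

theorem conjComp (hg : g ∈ H) (h : IsTwist H deg ψ φ) :
    IsTwist H deg (conjComp g ψ) (conjComp g φ) := by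
  refine ⟨fun k hk => by simp [h.1 k hk], fun f => ?_⟩
  simpa [mul_assoc] using conj_mem_subgroup_conjComp hg (h.2 f)

end IsTwist

theorem isTwist_conjComp_self_iff (hg : g ∈ H) :
    IsTwist H deg (conjComp g φ) φ ↔ g ∈ subgroup H deg φ := by
  constructor
  · intro h
    refine ⟨fun f => ?_, fun k hk => ?_⟩
    · have := H.mul_mem (subgroup_le (h.2 f⁻¹)) hg
      simpa [mul_assoc] using this
    · have := h.1 k hk
      simp only [conjComp_apply] at this
      exact (mul_inv_eq_iff_eq_mul.mp this)
  · intro hg'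
    refine ⟨fun k hk => by simp [(hg'.2 k hk).eq], fun f => ?_⟩
    have := (subgroup H deg φ).mul_mem (conj_mem_subgroup hg' f⁻¹) ((subgroup H deg φ).inv_mem hg')
    simpa [mul_assoc] using this

theorem isTwist_conjComp_iff_mul_inv_mem {x : F →* G} {h₀ : G} (hh₀ : h₀ ∈ H)
    (hx : IsTwist H deg (conjComp h₀ x) φ) (h : G) :
    h ∈ H ∧ IsTwist H deg (conjComp h x) φ ↔ h * h₀⁻¹ ∈ subgroup H deg φ := by
  have hconj : conjComp h x = conjComp (h * h₀⁻¹) (conjComp h₀ x) := by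
    rw [conjComp_conjComp, inv_mul_cancel_right]
  rw [hconj, ← hx.subgroup_eq]
  constructor
  · rintro ⟨hh, htw⟩
    exact (isTwist_conjComp_self_iff (H.mul_mem hh (H.inv_mem hh₀))).mp (htw.trans hx.symm)
  · intro hg
    exact ⟨by simpa using H.mul_mem (subgroup_le hg) hh₀,
      ((isTwist_conjComp_self_iff (subgroup_le hg)).mpr hg).trans hx⟩

variable (H deg) in
def setoid : Setoid (F →* G) where
  r ψ φ := ∃ h ∈ H, IsTwist H deg (conjComp h ψ) φ
  iseqv.refl φ := ⟨1, H.one_mem, by simpa using IsTwist.refl φ⟩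
  iseqv.symm := by
    rintro ψ φ ⟨h, hh, htw⟩
    refine ⟨h⁻¹, H.inv_mem hh, ?_⟩
    simpa [conjComp_conjComp] using (htw.conjComp (H.inv_mem hh)).symm
  iseqv.trans := by
    rintro χ ψ φ ⟨h, hh, h₁⟩ ⟨g, hg, h₂⟩
    exact ⟨g * h, H.mul_mem hg hh, by
      simpa [conjComp_conjComp] using (h₁.conjComp hg).trans h₂⟩

variable {f₁ : F}

theorem natCard_isTwist (hf₁ : deg f₁ = Multiplicative.ofAdd 1) (φ : F →* G) :
    Nat.card {ψ // IsTwist H deg ψ φ} = Nat.card (subgroup H deg φ) := by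
  refine Nat.card_eq_of_bijective (fun ψ => ⟨(φ f₁)⁻¹ * ψ.1 f₁, ψ.2.2 f₁⟩) ⟨?_, ?_⟩
  · rintro ⟨ψ, hψ⟩ ⟨ψ', hψ'⟩ h
    have h₁ : ψ f₁ = ψ' f₁ := by simpa using congrArg Subtype.val h
    exact Subtype.ext <| MonoidHom.ext_of_eqOn_ker hf₁
      (fun k hk => (hψ.1 k hk).trans (hψ'.1 k hk).symm) h₁
  · rintro ⟨κ, hκ⟩
    have hcompat (k : F) (hk : k ∈ deg.ker) :
        φ f₁ * κ * φ k * (φ f₁ * κ)⁻¹ = φ (f₁ * k * f₁⁻¹) := by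
      calc φ f₁ * κ * φ k * (φ f₁ * κ)⁻¹ = φ f₁ * (κ * φ k) * κ⁻¹ * (φ f₁)⁻¹ := by group
        _ = φ (f₁ * k * f₁⁻¹) := by rw [(hκ.2 k hk).eq]; simp [mul_assoc]
    obtain ⟨ψ, hker, h₁⟩ := exists_monoidHom_eqOn_ker_of_conj_eq hf₁ φ hcompat
    refine ⟨⟨ψ, hker, inv_mul_mem_of_mem_ker_of_mem hf₁ range_le_normalizer_subgroup
      (fun k hk => by simp [hker k hk]) (by simpa [h₁] using hκ)⟩, by simp [h₁]⟩

theorem natCard_setoid_class [Finite G] (hf₁ : deg f₁ = Multiplicative.ofAdd 1)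
    (φ : F →* G) : Nat.card {ψ // setoid H deg ψ φ} = Nat.card H := by
  -- Count `P` through `h` (fibres are twists of `φ`) and through `x` (fibres are cosets `K_φ h₀`).
  let P := {p : G × (F →* G) // p.1 ∈ H ∧ IsTwist H deg (conjComp p.1 p.2) φ}
  have hP₁ : Nat.card P = Nat.card H * Nat.card (subgroup H deg φ) := by
    rw [← natCard_isTwist hf₁ φ, ← Nat.card_prod]
    refine Nat.card_eq_of_bijective
      (fun p => (⟨p.1.1, p.2.1⟩, ⟨conjComp p.1.1 p.1.2, p.2.2⟩)) ⟨?_, ?_⟩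
    · rintro ⟨⟨h, x⟩, hp⟩ ⟨⟨h', x'⟩, hp'⟩ e
      simp only [Prod.mk.injEq, Subtype.mk.injEq] at e
      obtain ⟨rfl, e⟩ := e
      obtain rfl : x = x' := by simpa [conjComp_conjComp] using congrArg (conjComp h⁻¹) e
      rfl
    · rintro ⟨⟨h, hh⟩, ⟨ψ, hψ⟩⟩
      exact ⟨⟨(h, conjComp h⁻¹ ψ), hh, by simpa [conjComp_conjComp] using hψ⟩,
        by simp [conjComp_conjComp]⟩
  have hP₂ : Nat.card P = Nat.card {ψ // setoid H deg ψ φ} * Nat.card (subgroup H deg φ) := by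
    rw [← Nat.card_prod]
    refine (Nat.card_eq_of_bijective (fun q => ⟨(q.2 * q.1.2.choose, q.1.1),
      (isTwist_conjComp_iff_mul_inv_mem q.1.2.choose_spec.1 q.1.2.choose_spec.2 _).mpr
        (by simp)⟩) ⟨?_, ?_⟩).symm
    · rintro ⟨⟨x, hx⟩, ⟨κ, hκ⟩⟩ ⟨⟨x', hx'⟩, ⟨κ', hκ'⟩⟩ e
      obtain ⟨e, rfl⟩ := Prod.ext_iff.mp (congrArg Subtype.val e)
      simpa using e
    · rintro ⟨⟨h, x⟩, hp⟩
      have hx : setoid H deg x φ := ⟨h, hp⟩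
      exact ⟨(⟨x, hx⟩, ⟨h * hx.choose⁻¹,
        (isTwist_conjComp_iff_mul_inv_mem hx.choose_spec.1 hx.choose_spec.2 _).mp hp⟩),
        by simp⟩
  exact Nat.eq_of_mul_eq_mul_right Nat.card_pos (hP₂.symm.trans hP₁)

end PhiCore

/-- Main theorem of [KM17] (the `n = 0` case of the paper's main theorem). -/
theorem km_main_theorem (F G : Type*) [Group F] [Group G] [Fintype G]
    (H : Subgroup G) (deg : F →* Multiplicative ℤ) (hdeg : Function.Surjective deg)
    (Φ : Set (F →* G))
    (hI : ∀ h ∈ H, ∀ φ ∈ Φ, ((MulAut.conj h⁻¹).toMonoidHom.comp φ) ∈ Φ)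
    (hII : ∀ φ ∈ Φ, ∀ h ∈ phiCore H deg φ, ∀ f₁ : F,
      deg f₁ = Multiplicative.ofAdd (1 : ℤ) →
      ∀ ψ : F →* G, (∀ f ∈ deg.ker, ψ f = φ f) → ψ f₁ = φ f₁ * h → ψ ∈ Φ) :
    Nat.card H ∣ Nat.card Φ := by
  obtain ⟨f₁, hf₁⟩ := hdeg (Multiplicative.ofAdd 1)
  refine (PhiCore.setoid H deg).dvd_natCard_of_natCard_class_eq
    (PhiCore.natCard_setoid_class hf₁) ?_
  rintro φ hφ ψ ⟨h, hh, htw⟩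
  have hψ : conjComp h ψ ∈ Φ :=
    hII φ hφ _ (htw.2 f₁) f₁ hf₁ _ htw.1 (mul_inv_cancel_left _ _).symm
  have hψ' : conjComp h⁻¹ (conjComp h ψ) ∈ Φ := hI h hh _ hψ
  rwa [conjComp_conjComp, inv_mul_cancel, conjComp_one] at hψ'
end
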